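/- arXiv:1312.7800 — 13 statements merged into one kernel-verified Lean document; each statement's English description precedes it below -/
import Mathlib

section
/- If (A, ⋆) is a finite-dimensional division algebra over a field K (i.e. ⋆ : A × A → A is bilinear and x ⋆ y ≠ 0 whenever x ≠ 0 and y ≠ 0) and • : A × A → A is a bilinear map such that for all nonzero x, y the vector x • y is nonzero and x ⋆ (x • y) is a scalar multiple of y, then there exists a unique quadratic form q on A such that x ⋆ (x • y) = q(x) · y for all x, y in A. -/
/-!
For fixed `x`, the endomorphism `y ↦ x ⋆ (x • y)` sends every vector to a multiple of itself,
so it is a homothety `c(x) • 1`. The map `x ↦ x ⋆ (x • ·)` is a quadratic map into `End A`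
taking values on the line `K ∙ 1`; composing it with a linear functional that sends `1` to `1`
turns `c` into a quadratic form.
-/

theorem LinearMap.exists_eq_smul_one_of_forall_eq_smul {R V : Type*} [CommRing R] [IsDomain R]
    [AddCommGroup V] [Module R V] [Module.Free R V] {f : V →ₗ[R] V}
    (h : ∀ v, v ≠ 0 → ∃ c : R, f v = c • v) : ∃ c : R, f = c • 1 := by
  refine exists_eq_smul_id_of_forall_notLinearIndependent fun v hli => ?_
  obtain ⟨c, hc⟩ := h v (by simpa using hli.ne_zero 0)
  exact neg_ne_zero.2 one_ne_zero (LinearIndependent.pair_iff.1 hli c (-1) (by simp [hc])).2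

theorem QuadraticMap.existsUnique_quadraticForm_smul_eq {K M N : Type*} [Field K]
    [AddCommGroup M] [Module K M] [AddCommGroup N] [Module K N] (Q : QuadraticMap K M N)
    {v : N} (hv : v ≠ 0) (h : ∀ x, ∃ c : K, Q x = c • v) :
    ∃! q : QuadraticForm K M, ∀ x, Q x = q x • v := by
  obtain ⟨f, hf⟩ := Module.Projective.exists_dual_eq_one K hv
  have hQ : ∀ x, Q x = f (Q x) • v := fun x => by
    obtain ⟨c, hc⟩ := h x
    simp [hc, hf]
  refine ⟨f.compQuadraticMap Q, hQ, fun q hq => ?_⟩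
  ext x
  exact smul_left_injective K hv ((hq x).symm.trans (hQ x))

namespace LinearMap

variable {R M N P L : Type*} [CommRing R] [AddCommGroup M] [Module R M] [AddCommGroup N]
  [Module R N] [AddCommGroup P] [Module R P] [AddCommGroup L] [Module R L]

def diagComp (f : M →ₗ[R] N →ₗ[R] P) (g : M →ₗ[R] L →ₗ[R] N) :
    QuadraticMap R M (L →ₗ[R] P) :=
  BilinMap.toQuadraticMap ((llcomp R L N P).compl₁₂ f g)

@[simp]
theorem diagComp_apply (f : M →ₗ[R] N →ₗ[R] P) (g : M →ₗ[R] L →ₗ[R] N) (x : M) :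
    f.diagComp g x = f x ∘ₗ g x :=
  rfl

end LinearMap

theorem stmt_0_general (K A : Type*) [Field K] [AddCommGroup A] [Module K A]
    [Nontrivial A]
    (star bull : A →ₗ[K] A →ₗ[K] A)
    (hbull : ∀ x y : A, x ≠ 0 → y ≠ 0 →
      bull x y ≠ 0 ∧ ∃ c : K, star x (bull x y) = c • y) :
    ∃! q : QuadraticForm K A, ∀ x y : A, star x (bull x y) = q x • y := by
  have hscalar : ∀ x, ∃ c : K, star.diagComp bull x = c • 1 := by
    intro x
    rcases eq_or_ne x 0 with rfl | hx
    · exact ⟨0, by simp⟩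
    · exact LinearMap.exists_eq_smul_one_of_forall_eq_smul fun y hy => (hbull x y hx hy).2
  simpa only [LinearMap.ext_iff, LinearMap.diagComp_apply, LinearMap.comp_apply,
    LinearMap.smul_apply, Module.End.one_apply] using
    (star.diagComp bull).existsUnique_quadraticForm_smul_eq one_ne_zero hscalar

theorem stmt_0 (K A : Type*) [Field K] [AddCommGroup A] [Module K A]
    [FiniteDimensional K A] [Nontrivial A]
    (star bull : A →ₗ[K] A →ₗ[K] A)
    (hstar : ∀ x y : A, x ≠ 0 → y ≠ 0 → star x y ≠ 0)
    (hbull : ∀ x y : A, x ≠ 0 → y ≠ 0 →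
      bull x y ≠ 0 ∧ ∃ c : K, star x (bull x y) = c • y) :
    ∃! q : QuadraticForm K A, ∀ x y : A, star x (bull x y) = q x • y :=
  stmt_0_general K A star bull hbull
end

section
/- Let (A, ⋆) be a finite-dimensional division algebra over K. If •₁ and •₂ are two bilinear quasi-left-inversions of ⋆ (that is, bilinear maps for which x ⋆ (x •ᵢ y) is always a nonzero scalar multiple of y for nonzero x, y), then there exists a nonzero scalar λ ∈ K with •₂ = λ •₁. -/
/-!
Since `star x` is injective for `x ≠ 0` and `x ⋆ (x •ᵢ y)` lies on the line `K y`, the two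
vectors `x •₁ y` and `x •₂ y` are proportional. A linear map that is pointwise proportional to
an injective one is a scalar multiple of it; applied first to `bull₁ x` (for fixed `x`) and then
to `bull₁` itself, this gives `bull₂ = l • bull₁`.
-/

open LinearMap Function

theorem LinearMap.exists_eq_smul_of_injective_of_forall_exists_smul {K V W : Type*} [Field K]
    [AddCommGroup V] [Module K V] [AddCommGroup W] [Module K W]
    {f g : V →ₗ[K] W} (hf : Injective f) (h : ∀ v, ∃ c : K, g v = c • f v) :
    ∃ c : K, g = c • f := by
  let e := LinearEquiv.ofInjective f hf
  have hg : ∀ v, g v ∈ range f := fun v => by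
    obtain ⟨c, hc⟩ := h v
    exact hc ▸ Submodule.smul_mem _ c (mem_range_self f v)
  let φ : range f →ₗ[K] range f := g.codRestrict (range f) hg ∘ₗ e.symm.toLinearMap
  obtain ⟨a, ha⟩ := φ.exists_eq_smul_id_of_forall_notLinearIndependent fun u => by
    obtain ⟨c, hc⟩ := h (e.symm u)
    have hφu : φ u = c • u := Subtype.ext (by simpa [φ, e] using hc)
    rw [hφu, LinearIndependent.pair_iff]
    intro hli
    simpa using hli c (-1) (by simp)
  refine ⟨a, LinearMap.ext fun v => ?_⟩
  simpa [φ, e] using congr_arg Subtype.val (LinearMap.congr_fun ha (e v))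

theorem LinearMap.exists_eq_smul_of_map_eq_smul {K V W : Type*} [Field K]
    [AddCommGroup V] [Module K V] [AddCommGroup W] [Module K W]
    {f : V →ₗ[K] W} (hf : Injective f) {u u' : V} {w : W} {a a' : K}
    (hu : u ≠ 0) (hfu : f u = a • w) (hfu' : f u' = a' • w) :
    ∃ c : K, u' = c • u := by
  have ha : a ≠ 0 := by
    rintro rfl
    exact hu (hf (by simpa using hfu))
  refine ⟨a' / a, hf ?_⟩
  rw [map_smul, hfu, hfu', smul_smul, div_mul_cancel₀ _ ha]

theorem stmt_2_general (K A : Type*) [Field K] [AddCommGroup A] [Module K A]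
    [Nontrivial A]
    (star bull₁ bull₂ : A →ₗ[K] A →ₗ[K] A)
    (hstar : ∀ x y : A, x ≠ 0 → y ≠ 0 → star x y ≠ 0)
    (hbull₁ : ∀ x y : A, x ≠ 0 → y ≠ 0 →
      bull₁ x y ≠ 0 ∧ ∃ c : K, star x (bull₁ x y) = c • y)
    (hbull₂ : ∀ x y : A, x ≠ 0 → y ≠ 0 →
      bull₂ x y ≠ 0 ∧ ∃ c : K, star x (bull₂ x y) = c • y) :
    ∃ l : K, l ≠ 0 ∧ ∀ x y : A, bull₂ x y = l • bull₁ x y := by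
  have injective_of_ne_zero {φ : A →ₗ[K] A} (hφ : ∀ y, y ≠ 0 → φ y ≠ 0) : Injective φ :=
    (injective_iff_map_eq_zero φ).2 fun y => not_imp_not.1 (hφ y)
  obtain ⟨y₀, hy₀⟩ := exists_ne (0 : A)
  have hrow : ∀ x, ∃ c : K, bull₂ x = c • bull₁ x := by
    intro x
    rcases eq_or_ne x 0 with rfl | hx
    · exact ⟨0, by simp⟩
    refine exists_eq_smul_of_injective_of_forall_exists_smul
      (injective_of_ne_zero fun y hy => (hbull₁ x y hx hy).1) fun y => ?_
    rcases eq_or_ne y 0 with rfl | hy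
    · exact ⟨0, by simp⟩
    obtain ⟨hne, c₁, hc₁⟩ := hbull₁ x y hx hy
    obtain ⟨-, c₂, hc₂⟩ := hbull₂ x y hx hy
    exact exists_eq_smul_of_map_eq_smul (injective_of_ne_zero (hstar x · hx)) hne hc₁ hc₂
  have hbull₁_inj : Injective bull₁ := (injective_iff_map_eq_zero _).2 fun x hx =>
    by_contra fun hx0 => (hbull₁ x y₀ hx0 hy₀).1 (by simp [hx])
  obtain ⟨l, hl⟩ := exists_eq_smul_of_injective_of_forall_exists_smul hbull₁_inj hrow
  refine ⟨l, ?_, fun x y => by rw [hl]; rfl⟩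
  rintro rfl
  exact (hbull₂ y₀ y₀ hy₀ hy₀).1 (by simp [hl])

theorem stmt_2 (K A : Type*) [Field K] [AddCommGroup A] [Module K A]
    [FiniteDimensional K A] [Nontrivial A]
    (star bull₁ bull₂ : A →ₗ[K] A →ₗ[K] A)
    (hstar : ∀ x y : A, x ≠ 0 → y ≠ 0 → star x y ≠ 0)
    (hbull₁ : ∀ x y : A, x ≠ 0 → y ≠ 0 →
      bull₁ x y ≠ 0 ∧ ∃ c : K, star x (bull₁ x y) = c • y)
    (hbull₂ : ∀ x y : A, x ≠ 0 → y ≠ 0 →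
      bull₂ x y ≠ 0 ∧ ∃ c : K, star x (bull₂ x y) = c • y) :
    ∃ l : K, l ≠ 0 ∧ ∀ x y : A, bull₂ x y = l • bull₁ x y :=
  stmt_2_general K A star bull₁ bull₂ hstar hbull₁ hbull₂
end

section
/- Let (A, ⋆, •) be an LDB division algebra with attached quadratic form q. Then for all x, y in A one has x • (x ⋆ y) = q(x) · y. -/
theorem LinearMap.apply_apply_eq_smul_of_injective {R M : Type*} [CommSemiring R]
    [AddCommMonoid M] [Module R M] {f g : M →ₗ[R] M} {c : R} (hf : Function.Injective f)
    (h : ∀ y, f (g y) = c • y) (y : M) : g (f y) = c • y :=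
  hf <| by rw [h, map_smul]

theorem stmt_4_general (K A : Type*) [Field K] [AddCommGroup A] [Module K A]
    (star bull : A →ₗ[K] A →ₗ[K] A)
    (hstar : ∀ x y : A, x ≠ 0 → y ≠ 0 → star x y ≠ 0)
    (q : QuadraticForm K A)
    (hq : ∀ x y : A, star x (bull x y) = q x • y) :
    ∀ x y : A, bull x (star x y) = q x • y := by
  intro x y
  rcases eq_or_ne x 0 with rfl | hx
  · simp
  have hinj : Function.Injective (star x) :=
    (injective_iff_map_eq_zero (star x)).2 fun z hz => by_contra (hstar x z hx · hz)
  exact LinearMap.apply_apply_eq_smul_of_injective hinj (hq x) y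

theorem stmt_4 (K A : Type*) [Field K] [AddCommGroup A] [Module K A]
    [FiniteDimensional K A] [Nontrivial A]
    (star bull : A →ₗ[K] A →ₗ[K] A)
    (hstar : ∀ x y : A, x ≠ 0 → y ≠ 0 → star x y ≠ 0)
    (hbull : ∀ x y : A, x ≠ 0 → y ≠ 0 → bull x y ≠ 0)
    (q : QuadraticForm K A)
    (hq : ∀ x y : A, star x (bull x y) = q x • y) :
    ∀ x y : A, bull x (star x y) = q x • y :=
  stmt_4_general K A star bull hstar q hq
end

section
/- Let (A, ⋆, •) be an LDB division algebra with attached quadratic form q, and suppose it is e-standard for some e ∈ A, i.e. e ⋆ − is the identity of A and x • y = (−x + b_q(x,e)e) ⋆ y for all x, y, where b_q is the polar form of q. Then for every x ∈ A the endomorphism L_x := (x ⋆ −) satisfies b_q(x,e)·L_x − L_x² = q(x)·id_A. In particular, if x is q-orthogonal to e then L_x² = −q(x)·id_A. -/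
/-! Because `e ⋆ -` is the identity, `x • -` is the endomorphism `b_q(x,e)·id - L_x`, so the
division identity `L_x ∘ (x • -) = q(x)·id` is literally the quadratic relation for `L_x`. -/

section

variable {R A : Type*} [CommRing R] [AddCommGroup A] [Module R A]

theorem LinearMap.map_neg_add_smul_of_eq_one (f : A →ₗ[R] A →ₗ[R] A) {e : A} (he : f e = 1)
    (x : A) (c : R) : f (-x + c • e) = c • 1 - f x := by
  rw [map_add, map_neg, map_smul, he, neg_add_eq_sub]

theorem smul_sub_mul_self_eq_smul_one (star bull : A →ₗ[R] A →ₗ[R] A) (q t : A → R)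
    (hq : ∀ x y : A, star x (bull x y) = q x • y) {e : A} (he : star e = 1)
    (hbull : ∀ x y : A, bull x y = star (-x + t x • e) y) (x : A) :
    t x • star x - star x * star x = q x • (1 : Module.End R A) := by
  have hconj : bull x = t x • 1 - star x := by
    rw [← star.map_neg_add_smul_of_eq_one he]
    exact LinearMap.ext (hbull x)
  have hinv : star x * bull x = q x • 1 := LinearMap.ext (hq x)
  rw [← hinv, hconj, mul_sub, mul_smul_comm, mul_one]

end

theorem stmt_5_general (K A : Type*) [Field K] [AddCommGroup A] [Module K A]
    (star bull : A →ₗ[K] A →ₗ[K] A)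
    (q : QuadraticForm K A)
    (hq : ∀ x y : A, star x (bull x y) = q x • y)
    (e : A)
    (he1 : ∀ y : A, star e y = y)
    (he2 : ∀ x y : A, bull x y = star (-x + QuadraticMap.polar ⇑q x e • e) y) :
    ∀ x : A,
      (QuadraticMap.polar ⇑q x e • (star x : Module.End K A)
        - (star x : Module.End K A) * (star x : Module.End K A)
        = q x • (1 : Module.End K A)) ∧
      (QuadraticMap.polar ⇑q x e = 0 →
        (star x : Module.End K A) * (star x : Module.End K A)
          = (-(q x)) • (1 : Module.End K A)) := by
  intro x
  have key := smul_sub_mul_self_eq_smul_one star bull q (QuadraticMap.polar q · e) hq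
    (LinearMap.ext he1) he2 x
  refine ⟨key, fun horth => ?_⟩
  rw [horth, zero_smul, zero_sub, neg_eq_iff_eq_neg] at key
  rw [key, neg_smul]

theorem stmt_5 (K A : Type*) [Field K] [AddCommGroup A] [Module K A]
    [FiniteDimensional K A] [Nontrivial A]
    (star bull : A →ₗ[K] A →ₗ[K] A)
    (hstar : ∀ x y : A, x ≠ 0 → y ≠ 0 → star x y ≠ 0)
    (hbull : ∀ x y : A, x ≠ 0 → y ≠ 0 → bull x y ≠ 0)
    (q : QuadraticForm K A)
    (hq : ∀ x y : A, star x (bull x y) = q x • y)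
    (e : A)
    (he1 : ∀ y : A, star e y = y)
    (he2 : ∀ x y : A, bull x y = star (-x + QuadraticMap.polar ⇑q x e • e) y) :
    ∀ x : A,
      (QuadraticMap.polar ⇑q x e • (star x : Module.End K A)
        - (star x : Module.End K A) * (star x : Module.End K A)
        = q x • (1 : Module.End K A)) ∧
      (QuadraticMap.polar ⇑q x e = 0 →
        (star x : Module.End K A) * (star x : Module.End K A)
          = (-(q x)) • (1 : Module.End K A)) :=
  stmt_5_general K A star bull q hq e he1 he2
end

section
/- Let (A, ⋆) be a finite-dimensional division algebra over K and let u be a K-linear endomorphism of A that commutes with the left multiplication operator x ⋆ − for every x ∈ A. Then the minimal polynomial of u is irreducible over K. -/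
/-!
The endomorphisms commuting with all left multiplications form the centralizer subalgebra of
`Set.range star` in `End K A`. A nonzero `v` in it is injective: if `v y = 0` with `y ≠ 0`, then
right multiplication by `y` is injective, hence surjective, and `v (x ⋆ y) = x ⋆ v y = 0` forces
`v = 0`. So the centralizer is a domain, and a minimal polynomial over a domain is irreducible.
-/

open Module

section

variable {K A : Type*} [Field K] [AddCommGroup A] [Module K A] [FiniteDimensional K A]
  {star : A →ₗ[K] A →ₗ[K] A}

theorem injective_of_mem_centralizer_range (hstar : ∀ x y : A, x ≠ 0 → y ≠ 0 → star x y ≠ 0)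
    {v : End K A} (hv : v ∈ Subalgebra.centralizer K (Set.range star)) (hv0 : v ≠ 0) :
    Function.Injective v := by
  rw [← LinearMap.ker_eq_bot, LinearMap.ker_eq_bot']
  intro y hy
  by_contra hy0
  have hright : Function.Surjective (star.flip y) :=
    LinearMap.injective_iff_surjective.mp <| (injective_iff_map_eq_zero _).mpr
      fun x hx => not_not.mp fun hx0 => hstar x y hx0 hy0 hx
  refine hv0 (LinearMap.ext fun z => ?_)
  obtain ⟨x, rfl⟩ := hright z
  have hcomm := congr($(Subalgebra.mem_centralizer_iff K |>.mp hv _ ⟨x, rfl⟩) y)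
  simp only [Module.End.mul_apply, LinearMap.flip_apply] at hcomm ⊢
  rw [← hcomm, hy, map_zero, LinearMap.zero_apply]

theorem noZeroDivisors_centralizer_range [Nontrivial A]
    (hstar : ∀ x y : A, x ≠ 0 → y ≠ 0 → star x y ≠ 0) :
    NoZeroDivisors (Subalgebra.centralizer K (Set.range star)) := by
  refine ⟨fun {v w} hvw => or_iff_not_imp_left.mpr fun hv0 => ?_⟩
  by_contra hw0
  have hinj : Function.Injective (v.1 * w.1) :=
    (injective_of_mem_centralizer_range hstar v.2 (by simpa using hv0)).comp
      (injective_of_mem_centralizer_range hstar w.2 (by simpa using hw0))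
  have hvw' : v.1 * w.1 = 0 := congr_arg Subtype.val hvw
  obtain ⟨z, hz⟩ := exists_ne (0 : A)
  exact hz (hinj (by simp [hvw']))

end

theorem stmt_6 (K A : Type*) [Field K] [AddCommGroup A] [Module K A]
    [FiniteDimensional K A] [Nontrivial A]
    (star : A →ₗ[K] A →ₗ[K] A)
    (hstar : ∀ x y : A, x ≠ 0 → y ≠ 0 → star x y ≠ 0)
    (u : Module.End K A)
    (hu : ∀ x y : A, u (star x y) = star x (u y)) :
    Irreducible (minpoly K u) := by
  let C := Subalgebra.centralizer K (Set.range star)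
  have huC : u ∈ C := by
    rintro _ ⟨x, rfl⟩
    exact LinearMap.ext fun y => (hu x y).symm
  have := noZeroDivisors_centralizer_range hstar
  have : IsDomain C := NoZeroDivisors.to_isDomain C
  have hirr := minpoly.irreducible (Algebra.IsIntegral.isIntegral (R := K) (⟨u, huC⟩ : C))
  rwa [← minpoly.algHom_eq C.val Subtype.val_injective] at hirr
end

section
/- Every LDB division algebra over a field K of dimension n > 1 has even dimension n. -/
/-!
Fix linearly independent `u, v` and let `L, R` denote the matrices of `star, bull`. The
composition law gives `(X • L u + L v) * (X • R u + R v) = r • 1` with `r(t) = q (t • u + v)`.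
As `q` is anisotropic, `r` is a quadratic without roots, hence irreducible. Taking determinants,
two polynomials of degree at most `n` multiply to `r ^ n`; so each is a unit times a power of `r`,
and the degree count forces the first to have degree exactly `n`, which is then even.
-/

open Polynomial

namespace Polynomial

theorem even_of_mul_eq_pow {K : Type*} [Field K] {r f g : K[X]} {n : ℕ}
    (hr : Irreducible r) (hr₂ : r.natDegree = 2) (hfg : f * g = r ^ n)
    (hf : f.natDegree ≤ n) (hg : g.natDegree ≤ n) : Even n := by
  have hrn : r ^ n ≠ 0 := pow_ne_zero _ hr.ne_zero
  have hf₀ : f ≠ 0 := by rintro rfl; simp [eq_comm, hrn] at hfg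
  have hg₀ : g ≠ 0 := by rintro rfl; simp [eq_comm, hrn] at hfg
  have hdeg : f.natDegree + g.natDegree = 2 * n := by
    rw [← natDegree_mul hf₀ hg₀, hfg, natDegree_pow, hr₂, mul_comm]
  obtain ⟨i, -, u, hu⟩ := (dvd_prime_pow hr.prime n).mp ⟨g, hfg.symm⟩
  have hfi : f.natDegree = 2 * i := by
    rw [natDegree_eq_of_degree_eq (degree_eq_degree_of_associated ⟨u, hu⟩), natDegree_pow, hr₂,
      mul_comm]
  exact ⟨i, by omega⟩

end Polynomial

theorem Matrix.pencil_mul_pencil {R n : Type*} [CommRing R] [Fintype n] [DecidableEq n]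
    {P₁ P₀ Q₁ Q₀ : Matrix n n R} {a b c : R} (h₁ : P₁ * Q₁ = a • 1)
    (h₂ : P₁ * Q₀ + P₀ * Q₁ = b • 1) (h₀ : P₀ * Q₀ = c • 1) :
    ((X : R[X]) • P₁.map C + P₀.map C) * ((X : R[X]) • Q₁.map C + Q₀.map C) =
      (C a * X ^ 2 + C b * X + C c) • (1 : Matrix n n R[X]) := by
  have map_C : ∀ {M : Matrix n n R} {r : R}, M = r • 1 → M.map C = C r • 1 := by
    rintro M r rfl; ext i j; simp [Matrix.one_apply, apply_ite C]
  calc _ = (X : R[X]) ^ 2 • (P₁ * Q₁).map C + (X : R[X]) • (P₁ * Q₀ + P₀ * Q₁).map C +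
        (P₀ * Q₀).map C := by
        simp only [Matrix.map_mul, Matrix.map_add _ (map_add C), add_mul, mul_add,
          smul_mul_assoc, mul_smul_comm, smul_add, smul_smul, ← pow_two]
        abel
    _ = _ := by
      rw [map_C h₁, map_C h₂, map_C h₀, smul_smul, smul_smul, ← add_smul, ← add_smul]
      ring_nf

namespace QuadraticMap

variable {K A : Type*} [Field K] [AddCommGroup A] [Module K A]

noncomputable def linePoly (q : QuadraticForm K A) (u v : A) : K[X] :=
  C (q u) * X ^ 2 + C (polar q u v) * X + C (q v)

theorem eval_linePoly (q : QuadraticForm K A) (u v : A) (s : K) :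
    (linePoly q u v).eval s = q (s • u + v) := by
  have h := polar_smul_left (Q := q) s u v
  rw [polar, QuadraticMap.map_smul] at h
  simp only [linePoly, eval_add, eval_mul, eval_C, eval_pow, eval_X, smul_eq_mul] at h ⊢
  linear_combination -h

theorem natDegree_linePoly {q : QuadraticForm K A} {u : A} (hu : q u ≠ 0) (v : A) :
    (linePoly q u v).natDegree = 2 :=
  natDegree_quadratic hu

theorem irreducible_linePoly {q : QuadraticForm K A} (hq : q.Anisotropic) {u v : A}
    (huv : LinearIndependent K ![u, v]) : Irreducible (linePoly q u v) := by
  refine irreducible_of_degree_le_three_of_not_isRoot ?_ fun s hs => ?_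
  · rw [natDegree_linePoly fun h => huv.ne_zero 0 (hq u h)]
    decide
  · have hsuv : s • u + v ≠ 0 := fun h =>
      one_ne_zero (LinearIndependent.pair_iff.mp huv s 1 (by rwa [one_smul])).2
    exact hsuv (hq _ (by rw [← eval_linePoly]; exact hs))

end QuadraticMap

section Composition

variable {R A : Type*} [CommRing R] [AddCommGroup A] [Module R A]

def IsComposition (star bull : A →ₗ[R] A →ₗ[R] A) (q : QuadraticMap R A R) : Prop :=
  ∀ x y : A, star x (bull x y) = q x • y

variable {star bull : A →ₗ[R] A →ₗ[R] A} {q : QuadraticMap R A R}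

namespace IsComposition

theorem mul_self (hq : IsComposition star bull q) (x : A) : star x * bull x = q x • 1 :=
  LinearMap.ext (hq x)

theorem mul_add_mul (hq : IsComposition star bull q) (x z : A) :
    star x * bull z + star z * bull x = QuadraticMap.polar q x z • 1 := by
  have h := hq.mul_self (x + z)
  simp only [map_add, mul_add, add_mul, hq.mul_self] at h
  rw [QuadraticMap.polar, sub_smul, sub_smul, ← h]
  abel

theorem anisotropic [Nontrivial A] (hstar : ∀ x y : A, x ≠ 0 → y ≠ 0 → star x y ≠ 0)
    (hbull : ∀ x y : A, x ≠ 0 → y ≠ 0 → bull x y ≠ 0) (hq : IsComposition star bull q) :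
    q.Anisotropic := by
  intro x hx
  by_contra hx₀
  obtain ⟨y, hy⟩ := exists_ne (0 : A)
  exact hstar x _ hx₀ (hbull x y hx₀ hy) (by rw [hq, hx, zero_smul])

end IsComposition

end Composition

theorem stmt_7 (K A : Type*) [Field K] [AddCommGroup A] [Module K A]
    [FiniteDimensional K A] [Nontrivial A]
    (star bull : A →ₗ[K] A →ₗ[K] A)
    (hstar : ∀ x y : A, x ≠ 0 → y ≠ 0 → star x y ≠ 0)
    (hbull : ∀ x y : A, x ≠ 0 → y ≠ 0 → bull x y ≠ 0)
    (q : QuadraticForm K A)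
    (hq : ∀ x y : A, star x (bull x y) = q x • y)
    (hdim : 1 < Module.finrank K A) :
    Even (Module.finrank K A) := by
  have hcomp : IsComposition star bull q := hq
  have haniso := hcomp.anisotropic hstar hbull
  obtain ⟨u, hu⟩ := exists_ne (0 : A)
  obtain ⟨v, huv⟩ := exists_linearIndependent_pair_of_one_lt_finrank hdim hu
  let φ := LinearMap.toMatrixAlgEquiv (Module.finBasis K A)
  have h₁ : φ (star u) * φ (bull u) = q u • 1 := by
    rw [← map_mul, hcomp.mul_self, map_smul, map_one]
  have h₂ : φ (star u) * φ (bull v) + φ (star v) * φ (bull u) = QuadraticMap.polar q u v • 1 := by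
    rw [← map_mul, ← map_mul, ← map_add, hcomp.mul_add_mul, map_smul, map_one]
  have h₀ : φ (star v) * φ (bull v) = q v • 1 := by
    rw [← map_mul, hcomp.mul_self, map_smul, map_one]
  refine even_of_mul_eq_pow (QuadraticMap.irreducible_linePoly haniso huv)
    (QuadraticMap.natDegree_linePoly (fun h => hu (haniso u h)) v) ?_
    ((natDegree_det_X_add_C_le (φ (star u)) (φ (star v))).trans_eq (Fintype.card_fin _))
    ((natDegree_det_X_add_C_le (φ (bull u)) (φ (bull v))).trans_eq (Fintype.card_fin _))
  rw [← Matrix.det_mul, Matrix.pencil_mul_pencil h₁ h₂ h₀, Matrix.det_smul, Matrix.det_one,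
    mul_one, Fintype.card_fin, QuadraticMap.linePoly]
end

section
/- If the field K has characteristic not 2, then every LDB division algebra over K has dimension 1, 2, 4, or 8. -/
/-!
For `x ≠ 0` the map `star x` is injective, so `star x ∘ bull x = q x • 1` also gives
`bull x ∘ star x = q x • 1`; polarizing both identities along a `q`-orthogonal basis
`v₀, …, vₙ₋₁` shows that the `n - 1` operators `bull v₀ ∘ star vₖ` (`k ≠ 0`) pairwise
anticommute and square to the nonzero scalars `-q(v₀) q(vₖ)` (`q` is anisotropic since `bull` is
regular). Over an algebraic closure, the product `H` of two such operators squares to a nonzero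
scalar `μ²`; its `±μ`-eigenspaces split the space, are swapped by the first operator and preserved
by the remaining ones. Induction gives `2 ^ ⌊(n - 1) / 2⌋ ∣ n`, which only holds for
`n = 1, 2, 4, 8`.
-/

open Module Module.End

section Anticommuting

variable {F V : Type*} [Field F] [AddCommGroup V] [Module F V]

theorem injective_of_mul_self_eq_smul_one {G : End F V} {c : F} (hc : c ≠ 0)
    (hG : G * G = c • 1) : Function.Injective G := by
  refine (injective_iff_map_eq_zero G).2 fun x hx => ?_
  have : c • x = 0 := by simpa [hx] using (LinearMap.congr_fun hG x).symm
  exact (smul_eq_zero.1 this).resolve_left hc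

theorem isCompl_eigenspace_neg (h2 : (2 : F) ≠ 0) {H : End F V} {μ : F} (hμ : μ ≠ 0)
    (hH : H * H = (μ * μ) • 1) : IsCompl (H.eigenspace μ) (H.eigenspace (-μ)) := by
  have hHH (x : V) : H (H x) = (μ * μ) • x := LinearMap.congr_fun hH x
  refine ⟨H.eigenspaces_iSupIndep.pairwiseDisjoint ?_, codisjoint_iff.2 <| eq_top_iff.2 ?_⟩
  · intro h
    exact mul_ne_zero h2 hμ (by linear_combination h)
  intro x _
  have hsplit : x = (2 * μ)⁻¹ • (μ • x + H x) + (2 * μ)⁻¹ • (μ • x - H x) := by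
    rw [← smul_add, add_add_sub_cancel, ← two_smul F, smul_smul, smul_smul, mul_assoc,
      inv_mul_cancel₀ (mul_ne_zero h2 hμ), one_smul]
  rw [hsplit]
  refine Submodule.add_mem_sup (Submodule.smul_mem _ _ ?_) (Submodule.smul_mem _ _ ?_) <;>
    simp only [mem_eigenspace_iff, map_add, map_sub, map_smul, hHH] <;> module

theorem finrank_eigenspace_le_neg [FiniteDimensional F V] {G H : End F V}
    (hG : Function.Injective G) (hGH : H * G = -(G * H)) (μ : F) :
    finrank F (H.eigenspace μ) ≤ finrank F (H.eigenspace (-μ)) := by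
  have hmaps : ∀ x ∈ H.eigenspace μ, G x ∈ H.eigenspace (-μ) := fun x hx => by
    rw [mem_eigenspace_iff] at hx ⊢
    rw [← mul_apply, hGH, LinearMap.neg_apply, mul_apply, hx, map_smul, neg_smul]
  exact LinearMap.finrank_le_finrank_of_injective (f := G.restrict hmaps)
    fun x y hxy => Subtype.ext (hG (congrArg Subtype.val hxy))

theorem finrank_eq_two_mul_finrank_eigenspace [FiniteDimensional F V] (h2 : (2 : F) ≠ 0)
    {G H : End F V} (hG : Function.Injective G) (hGH : H * G = -(G * H)) {μ : F} (hμ : μ ≠ 0)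
    (hH : H * H = (μ * μ) • 1) : finrank F V = 2 * finrank F (H.eigenspace μ) := by
  have hle := finrank_eigenspace_le_neg hG hGH μ
  have hge := finrank_eigenspace_le_neg hG hGH (-μ)
  rw [neg_neg] at hge
  have := Submodule.finrank_add_eq_of_isCompl (isCompl_eigenspace_neg h2 hμ hH)
  omega

theorem two_pow_half_dvd_finrank_of_isAlgClosed [IsAlgClosed F] (h2 : (2 : F) ≠ 0) :
    ∀ (m : ℕ) {V : Type*} [AddCommGroup V] [Module F V] [FiniteDimensional F V]
      (G : Fin m → End F V) (c : Fin m → F), (∀ k, c k ≠ 0) → (∀ k, G k * G k = c k • 1) →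
      Pairwise (fun k l => G k * G l = -(G l * G k)) → 2 ^ (m / 2) ∣ finrank F V
  | 0, _, _, _, _, _, _, _, _, _ => by simp
  | 1, _, _, _, _, _, _, _, _, _ => by simp
  | m + 2, V, _, _, _, G, c, hc, hsq, hanti => by
    have h10 : G 1 * G 0 = -(G 0 * G 1) := hanti (by simp)
    obtain ⟨μ, hμ⟩ := IsAlgClosed.exists_eq_mul_self (-(c 0 * c 1))
    have hμ0 : μ ≠ 0 := by
      rintro rfl
      exact mul_ne_zero (hc 0) (hc 1) (neg_eq_zero.1 (by simpa using hμ))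
    have hsq01 : G 0 * G 1 * (G 0 * G 1) = (μ * μ) • 1 := by
      calc G 0 * G 1 * (G 0 * G 1) = G 0 * (G 1 * G 0) * G 1 := by noncomm_ring
        _ = -((G 0 * G 0) * (G 1 * G 1)) := by rw [h10]; noncomm_ring
        _ = (μ * μ) • 1 := by rw [hsq, hsq, ← hμ, smul_mul_smul_comm, one_mul, neg_smul]
    have hHG₀ : G 0 * G 1 * G 0 = -(G 0 * (G 0 * G 1)) := by
      rw [mul_assoc, h10, mul_neg]
    have hcomm (k : Fin m) : Commute (G 0 * G 1) (G k.succ.succ) := by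
      have h0 : G 0 * G k.succ.succ = -(G k.succ.succ * G 0) := hanti (by simp [Fin.ext_iff])
      have h1 : G 1 * G k.succ.succ = -(G k.succ.succ * G 1) := hanti (by simp [Fin.ext_iff])
      calc G 0 * G 1 * G k.succ.succ = -(G 0 * G k.succ.succ * G 1) := by
            rw [mul_assoc, h1]; noncomm_ring
        _ = G k.succ.succ * (G 0 * G 1) := by rw [h0]; noncomm_ring
    let G' (k : Fin m) : End F ((G 0 * G 1).eigenspace μ) :=
      (G k.succ.succ).restrict (mapsTo_genEigenspace_of_comm (hcomm k) μ 1)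
    have hdvd := two_pow_half_dvd_finrank_of_isAlgClosed h2 m G' (fun k => c k.succ.succ)
      (fun k => hc _) (fun k => LinearMap.ext fun x => Subtype.ext (LinearMap.congr_fun (hsq _) x))
      (fun k l hkl => LinearMap.ext fun x => Subtype.ext
        (LinearMap.congr_fun (hanti ((Fin.succ_injective _).ne ((Fin.succ_injective _).ne hkl))) x))
    rw [finrank_eq_two_mul_finrank_eigenspace h2
      (injective_of_mul_self_eq_smul_one (hc 0) (hsq 0)) hHG₀ hμ0 hsq01,
      Nat.add_div_right _ two_pos, pow_succ, mul_comm]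
    exact mul_dvd_mul_left 2 hdvd

end Anticommuting

theorem two_pow_half_dvd_finrank {K V ι : Type*} [Field K] [AddCommGroup V] [Module K V]
    [FiniteDimensional K V] [Fintype ι] (h2 : (2 : K) ≠ 0) (G : ι → End K V) (c : ι → K)
    (hc : ∀ k, c k ≠ 0) (hsq : ∀ k, G k * G k = c k • 1)
    (hanti : Pairwise fun k l => G k * G l = -(G l * G k)) :
    2 ^ (Fintype.card ι / 2) ∣ finrank K V := by
  let e := Fintype.equivFin ι
  let φ := baseChangeHom K (AlgebraicClosure K) V
  rw [← finrank_baseChange (R := AlgebraicClosure K)]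
  refine two_pow_half_dvd_finrank_of_isAlgClosed ?_ _
    (fun k => φ (G (e.symm k))) (fun k => algebraMap K _ (c (e.symm k)))
    (fun k => by simpa using hc _) (fun k => ?_) (fun k l hkl => ?_)
  · rw [← map_ofNat (algebraMap K (AlgebraicClosure K)) 2]
    exact (map_ne_zero _).2 h2
  · rw [← map_mul, hsq, map_smul, map_one, algebraMap_smul]
  · dsimp only
    rw [← map_mul, ← map_mul, hanti (e.symm.injective.ne hkl), map_neg]

theorem Module.End.mul_eq_smul_one_of_injective {R W : Type*} [CommRing R] [AddCommGroup W]
    [Module R W] {S C : End R W} {a : R} (hS : Function.Injective S) (h : S * C = a • 1) :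
    C * S = a • 1 :=
  LinearMap.ext fun y => hS <| by
    simpa only [mul_apply, LinearMap.smul_apply, one_apply, map_smul] using
      LinearMap.congr_fun h (S y)

section Composition

variable {R M W : Type*} [CommRing R] [AddCommGroup M] [Module R M] [AddCommGroup W] [Module R W]
  {S C : M →ₗ[R] End R W} {q : QuadraticForm R M}

theorem mul_eq_smul_one_swap (hS : ∀ x, x ≠ 0 → Function.Injective (S x))
    (h : ∀ x, S x * C x = q x • 1) (x : M) : C x * S x = q x • 1 := by
  rcases eq_or_ne x 0 with rfl | hx
  · simp
  · exact mul_eq_smul_one_of_injective (hS x hx) (h x)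

theorem anisotropic_of_mul_eq_smul_one [Nontrivial W]
    (hS : ∀ x, x ≠ 0 → Function.Injective (S x))
    (hC : ∀ x y, x ≠ 0 → y ≠ 0 → C x y ≠ 0) (h : ∀ x, S x * C x = q x • 1) :
    q.Anisotropic := by
  intro x hx
  by_contra hx0
  obtain ⟨y, hy⟩ := exists_ne (0 : W)
  refine hC x y hx0 hy (hS x hx0 ?_)
  rw [map_zero, ← mul_apply, h, hx, zero_smul, LinearMap.zero_apply]

theorem mul_eq_neg_mul_of_isOrtho (h : ∀ x, S x * C x = q x • 1) {x y : M}
    (hxy : q.IsOrtho x y) : S x * C y = -(S y * C x) := by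
  have hsum := h (x + y)
  rw [map_add, map_add, hxy, add_smul, ← h x, ← h y] at hsum
  rw [eq_neg_iff_add_eq_zero]
  linear_combination (norm := noncomm_ring) hsum

theorem mul_self_of_isOrtho (hSC : ∀ x, S x * C x = q x • 1)
    (hCS : ∀ x, C x * S x = q x • 1) {x y : M} (hxy : q.IsOrtho x y) :
    C x * S y * (C x * S y) = -(q x * q y) • 1 := by
  calc C x * S y * (C x * S y) = C x * (S y * C x) * S y := by noncomm_ring
    _ = -((C x * S x) * (C y * S y)) := by
      rw [mul_eq_neg_mul_of_isOrtho hSC hxy.symm]; noncomm_ring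
    _ = -(q x * q y) • 1 := by rw [hCS, hCS, smul_mul_smul_comm, one_mul, neg_smul]

theorem anticomm_of_isOrtho (hSC : ∀ x, S x * C x = q x • 1)
    (hCS : ∀ x, C x * S x = q x • 1) {x y z : M} (hxy : q.IsOrtho x y) (hxz : q.IsOrtho x z)
    (hyz : q.IsOrtho y z) :
    C x * S y * (C x * S z) = -(C x * S z * (C x * S y)) := by
  have hswap {y z : M} (hxy : q.IsOrtho x y) :
      C x * S y * (C x * S z) = -(q x • (C y * S z)) := by
    calc C x * S y * (C x * S z) = C x * (S y * C x) * S z := by noncomm_ring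
      _ = -((C x * S x) * (C y * S z)) := by
        rw [mul_eq_neg_mul_of_isOrtho hSC hxy.symm]; noncomm_ring
      _ = -(q x • (C y * S z)) := by rw [hCS, smul_mul_assoc, one_mul]
  rw [hswap hxy, hswap hxz, mul_eq_neg_mul_of_isOrtho hCS hyz, smul_neg]

end Composition

theorem two_pow_dvd_finrank_of_mul_eq_smul_one {K M W : Type*} [Field K] [AddCommGroup M]
    [Module K M] [AddCommGroup W] [Module K W] [FiniteDimensional K M] [FiniteDimensional K W]
    (h2 : (2 : K) ≠ 0) {S C : M →ₗ[K] End K W} {q : QuadraticForm K M} (hq : q.Anisotropic)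
    (hSC : ∀ x, S x * C x = q x • 1) (hCS : ∀ x, C x * S x = q x • 1) :
    2 ^ ((finrank K M - 1) / 2) ∣ finrank K W := by
  rcases Nat.eq_zero_or_pos (finrank K M) with h0 | hpos
  · simp [h0]
  let : Invertible (2 : K) := invertibleOfNonzero h2
  obtain ⟨v, hv⟩ :=
    LinearMap.BilinForm.exists_orthogonal_basis (QuadraticForm.associated_isSymm K q)
  have hortho {i j} (hij : i ≠ j) : q.IsOrtho (v i) (v j) :=
    QuadraticMap.associated_isOrtho.1 (hv hij)
  have hqv (i) : q (v i) ≠ 0 := fun h => v.ne_zero i (hq _ h)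
  let L : Fin (finrank K M) := ⟨0, hpos⟩
  have := two_pow_half_dvd_finrank h2 (fun k : {k // k ≠ L} => C (v L) * S (v k))
    (fun k => -(q (v L) * q (v k))) (fun k => neg_ne_zero.2 (mul_ne_zero (hqv L) (hqv k)))
    (fun k => mul_self_of_isOrtho hSC hCS (hortho k.2.symm))
    (fun k l hkl => anticomm_of_isOrtho hSC hCS (hortho k.2.symm) (hortho l.2.symm)
      (hortho (Subtype.coe_injective.ne hkl)))
  simpa using this

theorem eq_one_or_two_or_four_or_eight_of_two_pow_dvd {n : ℕ} (hn : 0 < n)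
    (h : 2 ^ ((n - 1) / 2) ∣ n) : n = 1 ∨ n = 2 ∨ n = 4 ∨ n = 8 := by
  rcases Nat.lt_or_ge n 9 with hlt | hge
  · interval_cases n <;> simp_all
  obtain ⟨j, hj⟩ : ∃ j, (n - 1) / 2 = j + 2 := ⟨(n - 1) / 2 - 2, by omega⟩
  have hle := Nat.le_of_dvd hn h
  rw [hj, pow_add] at hle
  have := Nat.lt_two_pow_self (n := j)
  omega

theorem stmt_9 (K A : Type*) [Field K] [AddCommGroup A] [Module K A]
    [FiniteDimensional K A] [Nontrivial A]
    (hchar : (2 : K) ≠ 0)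
    (star bull : A →ₗ[K] A →ₗ[K] A)
    (hstar : ∀ x y : A, x ≠ 0 → y ≠ 0 → star x y ≠ 0)
    (hbull : ∀ x y : A, x ≠ 0 → y ≠ 0 → bull x y ≠ 0)
    (q : QuadraticForm K A)
    (hq : ∀ x y : A, star x (bull x y) = q x • y) :
    Module.finrank K A = 1 ∨ Module.finrank K A = 2 ∨
    Module.finrank K A = 4 ∨ Module.finrank K A = 8 := by
  have hinj (x : A) (hx : x ≠ 0) : Function.Injective (star x) :=
    (injective_iff_map_eq_zero _).2 fun y => not_imp_not.1 (hstar x y hx)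
  have hSC (x : A) : star x * bull x = q x • 1 := LinearMap.ext (hq x)
  exact eq_one_or_two_or_four_or_eight_of_two_pow_dvd finrank_pos <|
    two_pow_dvd_finrank_of_mul_eq_smul_one hchar (anisotropic_of_mul_eq_smul_one hinj hbull hSC)
      hSC (mul_eq_smul_one_swap hinj hSC)
end

section
/- Let K be a field of characteristic 2 and L a finite-dimensional field extension of K that is hyper-radicial, i.e. x² ∈ K for all x ∈ L. Then, viewing multiplication of L as a bilinear map ⋆ over K, the triple (L, ⋆, ⋆) is an LDB division algebra over K whose attached quadratic form is q : x ↦ x², and this q is anisotropic with identically zero polar form. -/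
/-!
In characteristic 2 the Frobenius `x ↦ x²` is additive, and it is `K`-semilinear with respect to
`a ↦ a²`. On a hyper-radicial extension it takes values in `K`, so it is a quadratic form over `K`
whose polar form vanishes. It is anisotropic because `L` has no nilpotents, and
`x * (x * y) = x² * y` is the left-division identity.
-/

namespace HyperRadicial

variable {K L : Type*} [Field K] [CommRing L] [Algebra K L]
  (hrad : ∀ x : L, ∃ c : K, x ^ 2 = algebraMap K L c)

noncomputable def sqCoeff (x : L) : K := (hrad x).choose

theorem algebraMap_sqCoeff (x : L) : algebraMap K L (sqCoeff hrad x) = x ^ 2 :=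
  (hrad x).choose_spec.symm

variable [Nontrivial L]

theorem sqCoeff_eq_iff {x : L} {c : K} : sqCoeff hrad x = c ↔ x ^ 2 = algebraMap K L c := by
  rw [← algebraMap_sqCoeff hrad x, (algebraMap K L).injective.eq_iff]

theorem sqCoeff_smul (a : K) (x : L) : sqCoeff hrad (a • x) = (a * a) • sqCoeff hrad x := by
  rw [sqCoeff_eq_iff, smul_eq_mul, map_mul, map_mul, algebraMap_sqCoeff, Algebra.smul_def,
    mul_pow, sq]

theorem sqCoeff_add [CharP K 2] (x y : L) :
    sqCoeff hrad (x + y) = sqCoeff hrad x + sqCoeff hrad y := by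
  have : CharP L 2 := charP_of_injective_algebraMap' K 2
  rw [sqCoeff_eq_iff, map_add, algebraMap_sqCoeff, algebraMap_sqCoeff, add_pow_char]

theorem polar_sqCoeff [CharP K 2] (x y : L) : QuadraticMap.polar (sqCoeff hrad) x y = 0 := by
  rw [QuadraticMap.polar, sqCoeff_add]
  ring

noncomputable def sqForm [CharP K 2] : QuadraticForm K L :=
  QuadraticMap.ofPolar (sqCoeff hrad) (sqCoeff_smul hrad)
    (fun x x' y ↦ by simp only [polar_sqCoeff, add_zero])
    (fun a x y ↦ by simp only [polar_sqCoeff, smul_zero])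

theorem sqForm_apply [CharP K 2] (x : L) : sqForm hrad x = sqCoeff hrad x := rfl

theorem mul_mul_eq_sqForm_smul [CharP K 2] (x y : L) : x * (x * y) = sqForm hrad x • y := by
  rw [sqForm_apply, Algebra.smul_def, algebraMap_sqCoeff, ← mul_assoc, sq]

theorem sqForm_anisotropic [CharP K 2] [IsReduced L] : (sqForm hrad).Anisotropic := by
  intro x hx
  rw [sqForm_apply, sqCoeff_eq_iff, map_zero] at hx
  exact IsNilpotent.eq_zero ⟨2, hx⟩

end HyperRadicial

theorem stmt_12_general (K L : Type*) [Field K] [Field L] [Algebra K L]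
    [CharP K 2]
    (hrad : ∀ x : L, ∃ c : K, x ^ 2 = algebraMap K L c) :
    ∃ q : QuadraticForm K L,
      (∀ x y : L, x * (x * y) = q x • y) ∧
      (∀ x : L, x ≠ 0 → q x ≠ 0) ∧
      (∀ x y : L, QuadraticMap.polar ⇑q x y = 0) ∧
      (∀ x : L, algebraMap K L (q x) = x ^ 2) :=
  open HyperRadicial in
  ⟨sqForm hrad, mul_mul_eq_sqForm_smul hrad, fun x hx h ↦ hx (sqForm_anisotropic hrad x h),
    polar_sqCoeff hrad, algebraMap_sqCoeff hrad⟩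

theorem stmt_12 (K L : Type*) [Field K] [Field L] [Algebra K L]
    [CharP K 2] [FiniteDimensional K L]
    (hrad : ∀ x : L, ∃ c : K, x ^ 2 = algebraMap K L c) :
    ∃ q : QuadraticForm K L,
      (∀ x y : L, x * (x * y) = q x • y) ∧
      (∀ x : L, x ≠ 0 → q x ≠ 0) ∧
      (∀ x y : L, QuadraticMap.polar ⇑q x y = 0) ∧
      (∀ x : L, algebraMap K L (q x) = x ^ 2) :=
  stmt_12_general K L hrad
end

section
/- Let (A, ⋆, •) be an LDB division algebra over a field K of characteristic 2 whose attached quadratic form q has degenerate polar form (i.e. the radical of b_q is nonzero), and suppose some e in the radical of b_q satisfies q(e) = 1 and the algebra is e-standard (e ⋆ − = id and x • y = x ⋆ y for x in the radical). If L denotes the K-subalgebra of End_K(A) generated by the operators x ⋆ − for x in the radical R of b_q, then L is a field and f² ∈ K·id_A for every f ∈ L. -/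
/-!
Polarizing `x ⋆ (x • y) = q(x) y` gives `u ⋆ (v • y) + v ⋆ (u • y) = b_q(u, v) y`. Taking `u = e`
shows `• = ⋆` in characteristic 2, after which the same identity says that `x ⋆ −` commutes with
every `v ⋆ −` when `x ∈ R`, and that `(x ⋆ −)² = q(x)`. Hence `L` is commutative and, since squaring
is additive in characteristic 2, every `f ∈ L` squares to a scalar. Such an `f` commutes with all
`v ⋆ −`, and `v ↦ v ⋆ k` is injective, hence onto, for `k ≠ 0`, so `f` vanishes as soon as it
kills one nonzero vector; thus `f² = 0` forces `f = 0`, and every nonzero `f` is invertible with inverse `c⁻¹ f`.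
-/

open Algebra

theorem neg_eq_self_of_charTwo (R : Type*) {M : Type*} [Ring R] [CharP R 2] [AddCommGroup M]
    [Module R M] (a : M) : -a = a := by
  rw [← neg_one_smul R a, CharTwo.neg_eq, one_smul]

section Polarization

open QuadraticMap

variable {R M : Type*} [CommRing R] [AddCommGroup M] [Module R M]
  {star bull : M →ₗ[R] M →ₗ[R] M} {q : QuadraticMap R M R}

theorem star_bull_add_star_bull (hq : ∀ x y, star x (bull x y) = q x • y) (u v y : M) :
    star u (bull v y) + star v (bull u y) = polar q u v • y := by
  rw [polar, sub_smul, sub_smul, ← hq (u + v) y, ← hq u y, ← hq v y]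
  simp only [map_add, LinearMap.add_apply]
  abel

variable [CharP R 2]

theorem bull_eq_star_of_polar_eq_zero (hq : ∀ x y, star x (bull x y) = q x • y) {e : M}
    (he : ∀ v, polar q e v = 0) (he_star : ∀ y, star e y = y) (he_bull : ∀ y, bull e y = y) :
    bull = star := by
  ext v y
  have h := star_bull_add_star_bull hq e v y
  rw [he, zero_smul, he_star, he_bull] at h
  rw [eq_neg_of_add_eq_zero_left h, neg_eq_self_of_charTwo R]

theorem commute_star_of_polar_eq_zero (hq : ∀ x y, star x (star x y) = q x • y) {u : M}
    (hu : ∀ v, polar q u v = 0) (v : M) : Commute (star u : Module.End R M) (star v) := by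
  ext y
  have h := star_bull_add_star_bull hq u v y
  rw [hu, zero_smul] at h
  rw [Module.End.mul_apply, Module.End.mul_apply, eq_neg_of_add_eq_zero_left h,
    neg_eq_self_of_charTwo R]

end Polarization

section Adjoin

variable {K B : Type*} [CommRing K] [Ring B] [Algebra K B] {s : Set B}

theorem commute_of_mem_adjoin_of_pairwise_commute (hs : ∀ a ∈ s, ∀ b ∈ s, Commute a b)
    {f g : B} (hf : f ∈ adjoin K s) (hg : g ∈ adjoin K s) : Commute f g :=
  commute_of_mem_adjoin_of_forall_mem_commute hg fun b hb =>
    (commute_of_mem_adjoin_of_forall_mem_commute hf fun a ha => hs b hb a ha).symm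

theorem exists_mul_self_eq_smul_one_of_mem_adjoin [CharP K 2]
    (hs : ∀ a ∈ s, ∀ b ∈ s, Commute a b) (hsq : ∀ a ∈ s, ∃ c : K, a * a = c • 1)
    {f : B} (hf : f ∈ adjoin K s) : ∃ c : K, f * f = c • 1 := by
  induction hf using adjoin_induction with
  | mem a ha => exact hsq a ha
  | algebraMap r => exact ⟨r * r, by rw [algebraMap_eq_smul_one, smul_mul_smul_comm, one_mul]⟩
  | add g h hg hh ihg ihh =>
    obtain ⟨a, ha⟩ := ihg
    obtain ⟨b, hb⟩ := ihh
    have h2 : (2 : B) = 0 := by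
      rw [← map_ofNat (algebraMap K B), CharTwo.two_eq_zero, map_zero]
    refine ⟨a + b, ?_⟩
    rw [← sq, (commute_of_mem_adjoin_of_pairwise_commute hs hg hh).add_sq, h2, zero_mul,
      zero_mul, add_zero, sq, sq, ha, hb, add_smul]
  | mul g h hg hh ihg ihh =>
    obtain ⟨a, ha⟩ := ihg
    obtain ⟨b, hb⟩ := ihh
    refine ⟨a * b, ?_⟩
    rw [(commute_of_mem_adjoin_of_pairwise_commute hs hh hg).mul_mul_mul_comm, ha, hb,
      smul_mul_smul_comm, one_mul]

end Adjoin

theorem Subalgebra.isField_of_mul_self_eq_smul_one {K B : Type*} [Field K] [Ring B]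
    [Algebra K B] [Nontrivial B] (L : Subalgebra K B) (hcomm : ∀ f ∈ L, ∀ g ∈ L, Commute f g)
    (hsq : ∀ f ∈ L, ∃ c : K, f * f = c • 1) (hred : ∀ f ∈ L, f * f = 0 → f = 0) :
    IsField L where
  exists_pair_ne := exists_pair_ne L
  mul_comm f g := Subtype.ext (hcomm f f.2 g g.2).eq
  mul_inv_cancel {f} hf := by
    obtain ⟨c, hc⟩ := hsq f f.2
    have hc0 : c ≠ 0 := by
      rintro rfl
      exact hf (Subtype.ext (hred f f.2 (by rw [hc, zero_smul])))
    refine ⟨⟨c⁻¹ • f, L.smul_mem f.2 c⁻¹⟩, Subtype.ext ?_⟩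
    change f.1 * (c⁻¹ • f.1) = 1
    rw [mul_smul_comm, hc, smul_smul, inv_mul_cancel₀ hc0, one_smul]

section Operators

variable {K A : Type*} [Field K] [AddCommGroup A] [Module K A] [FiniteDimensional K A]
  {star : A →ₗ[K] A →ₗ[K] A} {f : Module.End K A}

theorem eq_zero_of_commute_star_of_apply_eq_zero
    (hstar : ∀ x y : A, x ≠ 0 → y ≠ 0 → star x y ≠ 0) (hf : ∀ v, Commute f (star v))
    {k : A} (hk : k ≠ 0) (hfk : f k = 0) : f = 0 := by
  have hsurj : Function.Surjective (star.flip k) := by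
    refine LinearMap.injective_iff_surjective.mp ((injective_iff_map_eq_zero _).mpr ?_)
    intro v hv
    by_contra hv0
    exact hstar v k hv0 hk hv
  ext a
  obtain ⟨v, rfl⟩ := hsurj a
  change (f * star v) k = 0
  rw [(hf v).eq, Module.End.mul_apply, hfk, map_zero]

theorem eq_zero_of_commute_star_of_mul_self_eq_zero
    (hstar : ∀ x y : A, x ≠ 0 → y ≠ 0 → star x y ≠ 0) (hf : ∀ v, Commute f (star v))
    (hff : f * f = 0) : f = 0 := by
  by_contra hf0
  obtain ⟨a, ha⟩ := DFunLike.ne_iff.mp hf0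
  exact hf0 (eq_zero_of_commute_star_of_apply_eq_zero hstar hf ha
    (by rw [← Module.End.mul_apply, hff, LinearMap.zero_apply]))

end Operators

theorem stmt_14_general (K A : Type*) [Field K] [AddCommGroup A] [Module K A]
    [FiniteDimensional K A] [Nontrivial A] [CharP K 2]
    (star bull : A →ₗ[K] A →ₗ[K] A)
    (hstar : ∀ x y : A, x ≠ 0 → y ≠ 0 → star x y ≠ 0)
    (q : QuadraticForm K A)
    (hq : ∀ x y : A, star x (bull x y) = q x • y)
    (R : Set A) (hR : R = {x : A | ∀ y : A, QuadraticMap.polar ⇑q x y = 0})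
    (e : A) (he_rad : e ∈ R)
    (he_std : ∀ y : A, star e y = y)
    (hstd : ∀ x ∈ R, ∀ y : A, bull x y = star x y) :
    IsField (Algebra.adjoin K ((fun x : A => (star x : Module.End K A)) '' R)) ∧
    (∀ f : Module.End K A,
      f ∈ Algebra.adjoin K ((fun x : A => (star x : Module.End K A)) '' R) →
      ∃ c : K, f * f = c • (1 : Module.End K A)) := by
  subst hR
  have hbull_eq : bull = star := bull_eq_star_of_polar_eq_zero hq he_rad he_std
    fun y => (hstd e he_rad y).trans (he_std y)
  subst bull
  set S := (fun x : A => (star x : Module.End K A)) '' {x | ∀ y, QuadraticMap.polar q x y = 0}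
  have hS_star : ∀ f ∈ S, ∀ v, Commute f (star v) := by
    rintro _ ⟨u, hu, rfl⟩ v
    exact commute_star_of_polar_eq_zero hq hu v
  have hS_comm : ∀ f ∈ S, ∀ g ∈ S, Commute f g := by
    rintro f hf _ ⟨v, -, rfl⟩
    exact hS_star f hf v
  have hS_sq : ∀ f ∈ S, ∃ c : K, f * f = c • 1 := by
    rintro _ ⟨u, -, rfl⟩
    exact ⟨q u, LinearMap.ext (hq u)⟩
  have hL_star : ∀ f ∈ adjoin K S, ∀ v, Commute f (star v) := fun f hf v =>
    (commute_of_mem_adjoin_of_forall_mem_commute hf fun g hg => (hS_star g hg v).symm).symm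
  have hL_sq := fun f (hf : f ∈ adjoin K S) =>
    exists_mul_self_eq_smul_one_of_mem_adjoin hS_comm hS_sq hf
  refine ⟨(adjoin K S).isField_of_mul_self_eq_smul_one
    (fun f hf g hg => commute_of_mem_adjoin_of_pairwise_commute hS_comm hf hg) hL_sq
    fun f hf => eq_zero_of_commute_star_of_mul_self_eq_zero hstar (hL_star f hf), hL_sq⟩

theorem stmt_14 (K A : Type*) [Field K] [AddCommGroup A] [Module K A]
    [FiniteDimensional K A] [Nontrivial A] [CharP K 2]
    (star bull : A →ₗ[K] A →ₗ[K] A)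
    (hstar : ∀ x y : A, x ≠ 0 → y ≠ 0 → star x y ≠ 0)
    (hbull : ∀ x y : A, x ≠ 0 → y ≠ 0 → bull x y ≠ 0)
    (q : QuadraticForm K A)
    (hq : ∀ x y : A, star x (bull x y) = q x • y)
    (R : Set A) (hR : R = {x : A | ∀ y : A, QuadraticMap.polar ⇑q x y = 0})
    (e : A) (he_rad : e ∈ R) (he_q : q e = 1)
    (he_std : ∀ y : A, star e y = y)
    (hstd : ∀ x ∈ R, ∀ y : A, bull x y = star x y) :
    IsField (Algebra.adjoin K ((fun x : A => (star x : Module.End K A)) '' R)) ∧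
    (∀ f : Module.End K A,
      f ∈ Algebra.adjoin K ((fun x : A => (star x : Module.End K A)) '' R) →
      ∃ c : K, f * f = c • (1 : Module.End K A)) :=
  stmt_14_general K A star bull hstar q hq R hR e he_rad he_std hstd
end

section
/- Over a field K of characteristic 2, the quadratic form attached to an LDB division algebra is either totally degenerate (zero polar form) or non-degenerate. -/
/-! Suppose `a ≠ 0` lies in the radical of `b = polar q`. Polarizing `x ⋆ (x • y) = q(x) y` at `a`
gives, in characteristic 2, `a ⋆ (z • w) = z ⋆ (a • w)`, so `T z := q(a)⁻¹ • (a ⋆ (z • ·))`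
satisfies `T z ∘ T z = q(a)⁻¹ q(z)` and `T a = 1`, with every `T z` (`z ≠ 0`) injective.
Fix `y ≠ 0`; as `z ↦ T z y` is bijective, `T u (T v y) = T z y` for some `z`, and expanding
`T z (T u (T v y))` with the anticommutation relations `T z T w + T w T z = b(z, w)` shows that,
when `b(u, v) ≠ 0`, `T u (T v y)` lies in the span of `y`, `T u y`, `T v y`. Shifting `u` and `v`
by multiples of `a` turns this into `T u' (T v' y) ∈ K y` with `b(u', v') = b(u, v)`; applying
`T u'` gives `q(u') v' ∈ K u'`, so `q(u') b(u', v') = 0` since `b(u', u') = 2 q(u') = 0`.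
Hence `b = 0`. -/

open QuadraticMap

section Anticommutation

variable {K A : Type*} [CommRing K] [AddCommGroup A] [Module K A] {Q : QuadraticMap K A K}
  {S T : A →ₗ[K] A →ₗ[K] A}

theorem apply_apply_add_apply_apply_eq_polar_smul (h : ∀ z x, S z (T z x) = Q z • x)
    (z w x : A) : S z (T w x) + S w (T z x) = polar Q z w • x := by
  rw [polar, sub_smul, sub_smul, ← h, ← h, ← h]
  simp only [map_add, LinearMap.add_apply]
  abel

theorem anisotropic_of_apply_apply_eq_smul (hS : ∀ z x, z ≠ 0 → x ≠ 0 → S z x ≠ 0)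
    (hT : ∀ z x, z ≠ 0 → x ≠ 0 → T z x ≠ 0) (h : ∀ z x, S z (T z x) = Q z • x) :
    Q.Anisotropic := fun z hz => by
  by_contra hz0
  exact hS z _ hz0 (hT z z hz0 hz0) (by rw [h, hz, zero_smul])

end Anticommutation

section SquareRootsOfQ

variable {K A : Type*} [Field K] [AddCommGroup A] [Module K A] {Q : QuadraticForm K A}
  {T : A →ₗ[K] A →ₗ[K] A}

theorem polar_eq_zero_of_apply_apply_eq_smul [CharP K 2] (hsq : ∀ z x, T z (T z x) = Q z • x)
    (hinj : ∀ z x, z ≠ 0 → x ≠ 0 → T z x ≠ 0) {u v y : A} {e : K} (hy : y ≠ 0)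
    (h : T u (T v y) = e • y) : polar Q u v = 0 := by
  have hTu : Q u • T v y = e • T u y := by rw [← hsq, h, map_smul]
  have hker : T (Q u • v - e • u) y = 0 := by
    simp only [map_sub, map_smul, LinearMap.sub_apply, LinearMap.smul_apply, hTu, sub_self]
  have hv : Q u • v = e • u := sub_eq_zero.mp (by_contra fun hne => hinj _ _ hne hy hker)
  have hprod : Q u * polar Q u v = 0 := by
    simpa [polar_smul_right, polar_self, CharTwo.two_eq_zero] using congrArg (polar Q u) hv
  rcases mul_eq_zero.mp hprod with hQu | hβ
  · rw [anisotropic_of_apply_apply_eq_smul hinj hinj hsq u hQu, polar_zero_left]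
  · exact hβ

theorem exists_apply_apply_eq_add [FiniteDimensional K A] (hsq : ∀ z x, T z (T z x) = Q z • x)
    (hinj : ∀ z x, z ≠ 0 → x ≠ 0 → T z x ≠ 0) {u v y : A} (hy : y ≠ 0)
    (huv : polar Q u v ≠ 0) :
    ∃ α γ δ : K, T u (T v y) = α • y + γ • T u y + δ • T v y := by
  have hsurj : Function.Surjective (T.flip y) := by
    refine LinearMap.injective_iff_surjective.mp ((injective_iff_map_eq_zero _).2 fun z hz => ?_)
    by_contra hz0
    exact hinj z y hz0 hy hz
  obtain ⟨z, hz⟩ := hsurj (T u (T v y))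
  rw [LinearMap.flip_apply] at hz
  have anti := apply_apply_add_apply_apply_eq_polar_smul hsq
  have hzz : T z (T u (T v y)) = Q z • y := by rw [← hz, hsq]
  have hvu : T v (T u (T v y)) + Q v • T u y = polar Q v u • T v y := by
    simpa only [hsq, map_smul] using anti v u (T v y)
  have key : polar Q u v • T u (T v y)
      = (Q z + Q u * Q v) • y + polar Q z v • T u y - polar Q z u • T v y := by
    have e1 := anti z u (T v y)
    have e2 := congrArg (T u) (anti z v y)
    have e3 := congrArg (T u) hvu
    simp only [map_add, map_smul, hz, hsq] at e2 e3
    rw [polar_comm Q v u] at e3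
    linear_combination (norm := module) -e3 - e1 + e2 + hzz
  refine ⟨(polar Q u v)⁻¹ * (Q z + Q u * Q v), (polar Q u v)⁻¹ * polar Q z v,
    -((polar Q u v)⁻¹ * polar Q z u), ?_⟩
  rw [← inv_smul_smul₀ huv (T u (T v y)), key]
  module

theorem polar_eq_zero_of_apply_eq_id [CharP K 2] [FiniteDimensional K A]
    (hsq : ∀ z x, T z (T z x) = Q z • x) (hinj : ∀ z x, z ≠ 0 → x ≠ 0 → T z x ≠ 0) {a : A}
    (ha : T a = LinearMap.id) (u v : A) : polar Q u v = 0 := by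
  by_contra huv
  have hu : u ≠ 0 := by
    rintro rfl
    exact huv (polar_zero_left Q v)
  have hrad : ∀ z, polar Q a z = 0 := fun z => by
    have h := apply_apply_add_apply_apply_eq_polar_smul hsq a z u
    rw [ha, LinearMap.id_apply, LinearMap.id_apply, ← two_smul K, CharTwo.two_eq_zero,
      zero_smul, eq_comm, smul_eq_zero] at h
    exact h.resolve_right hu
  obtain ⟨α, γ, δ, h⟩ := exists_apply_apply_eq_add hsq hinj hu huv
  have hshift : T (u - δ • a) (T (v - γ • a) u) = (α + δ * γ) • u := by
    simp only [map_sub, map_smul, ha, LinearMap.sub_apply, LinearMap.smul_apply,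
      LinearMap.id_apply, h]
    module
  apply huv
  simpa [polar_sub_left, polar_sub_right, polar_smul_left, polar_smul_right, hrad,
    polar_comm Q _ a] using polar_eq_zero_of_apply_apply_eq_smul hsq hinj hu hshift

end SquareRootsOfQ

section LDBDivisionAlgebra

variable {K A : Type*} [Field K] [AddCommGroup A] [Module K A] {q : QuadraticForm K A}
  {star bull : A →ₗ[K] A →ₗ[K] A}

theorem bull_star_eq_smul (hstar : ∀ x y : A, x ≠ 0 → y ≠ 0 → star x y ≠ 0)
    (hq : ∀ x y : A, star x (bull x y) = q x • y) {a : A} (ha : a ≠ 0) (x : A) :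
    bull a (star a x) = q a • x := by
  have h : star a (bull a (star a x) - q a • x) = 0 := by
    rw [map_sub, hq, map_smul, sub_self]
  exact sub_eq_zero.mp (by_contra fun hne => hstar a _ ha hne h)

theorem star_bull_star_eq_smul_star [CharP K 2] (hstar : ∀ x y : A, x ≠ 0 → y ≠ 0 → star x y ≠ 0)
    (hq : ∀ x y : A, star x (bull x y) = q x • y) {a : A} (ha : a ≠ 0)
    (hrad : ∀ z, polar q a z = 0) (z x : A) : star a (bull z (star a x)) = q a • star z x := by
  have h := apply_apply_add_apply_apply_eq_polar_smul hq a z (star a x)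
  rw [hrad, zero_smul, bull_star_eq_smul hstar hq ha, map_smul] at h
  rw [eq_neg_of_add_eq_zero_left h, ← neg_smul, CharTwo.neg_eq]

theorem polar_eq_zero_of_mem_radical [CharP K 2] [FiniteDimensional K A]
    (hstar : ∀ x y : A, x ≠ 0 → y ≠ 0 → star x y ≠ 0)
    (hbull : ∀ x y : A, x ≠ 0 → y ≠ 0 → bull x y ≠ 0) (hq : ∀ x y : A, star x (bull x y) = q x • y)
    {a : A} (ha : a ≠ 0) (hrad : ∀ z, polar q a z = 0) (x y : A) : polar q x y = 0 := by
  have hqa : q a ≠ 0 := fun h => ha (anisotropic_of_apply_apply_eq_smul hstar hbull hq a h)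
  let T := (q a)⁻¹ • bull.compr₂ (star a)
  have hT : ∀ z x, T z x = (q a)⁻¹ • star a (bull z x) := fun _ _ => rfl
  have hsq : ∀ z x, T z (T z x) = ((q a)⁻¹ • q) z • x := fun z x => by
    rw [hT, hT, map_smul, map_smul, star_bull_star_eq_smul_star hstar hq ha hrad, hq,
      smul_smul, smul_smul, smul_smul, smul_apply, smul_eq_mul]
    congr 1
    field_simp
  have hinj : ∀ z x, z ≠ 0 → x ≠ 0 → T z x ≠ 0 := fun z x hz hx => by
    rw [hT]
    exact smul_ne_zero (inv_ne_zero hqa) (hstar a _ ha (hbull z x hz hx))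
  have hTa : T a = LinearMap.id := by
    ext x
    rw [hT, hq, inv_smul_smul₀ hqa, LinearMap.id_apply]
  have h := polar_eq_zero_of_apply_eq_id hsq hinj hTa x y
  rwa [FunLike.coe_smul, polar_smul, smul_eq_zero, or_iff_right (inv_ne_zero hqa)] at h

end LDBDivisionAlgebra

theorem stmt_15_general (K A : Type*) [Field K] [AddCommGroup A] [Module K A]
    [FiniteDimensional K A] [CharP K 2]
    (star bull : A →ₗ[K] A →ₗ[K] A)
    (hstar : ∀ x y : A, x ≠ 0 → y ≠ 0 → star x y ≠ 0)
    (hbull : ∀ x y : A, x ≠ 0 → y ≠ 0 → bull x y ≠ 0)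
    (q : QuadraticForm K A)
    (hq : ∀ x y : A, star x (bull x y) = q x • y) :
    (∀ x y : A, QuadraticMap.polar ⇑q x y = 0) ∨
    (∀ x : A, (∀ y : A, QuadraticMap.polar ⇑q x y = 0) → x = 0) := by
  by_contra! h
  obtain ⟨⟨x, y, hxy⟩, a, hrad, ha⟩ := h
  exact hxy (polar_eq_zero_of_mem_radical hstar hbull hq ha hrad x y)

theorem stmt_15 (K A : Type*) [Field K] [AddCommGroup A] [Module K A]
    [FiniteDimensional K A] [Nontrivial A] [CharP K 2]
    (star bull : A →ₗ[K] A →ₗ[K] A)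
    (hstar : ∀ x y : A, x ≠ 0 → y ≠ 0 → star x y ≠ 0)
    (hbull : ∀ x y : A, x ≠ 0 → y ≠ 0 → bull x y ≠ 0)
    (q : QuadraticForm K A)
    (hq : ∀ x y : A, star x (bull x y) = q x • y) :
    (∀ x y : A, QuadraticMap.polar ⇑q x y = 0) ∨
    (∀ x : A, (∀ y : A, QuadraticMap.polar ⇑q x y = 0) → x = 0) :=
  stmt_15_general K A star bull hstar hbull q hq
end

section
/- Let (A, ⋆, •) be a 2-dimensional LDB division algebra over K whose attached quadratic form q represents 1, and suppose it is e-standard for some e with q(e)=1 (so e ⋆ − = id_A). Then L := {x ⋆ − : x ∈ A} ⊆ End_K(A) is a 2-dimensional commutative field extension of K·id_A in which every nonzero element is invertible, and the map x ↦ x ⋆ − is a K-linear isomorphism from A onto L. -/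
/-! The map `x ↦ x ⋆ -` is injective (`x ⋆ e = 0` forces `x = 0`), so its image `L` is a
2-dimensional subspace of `End_K(A)` containing `1 = e ⋆ -`; hence `L = K·1 + K·f` for some `f`.
By Cayley–Hamilton on the plane `A`, `f² ∈ K·1 + K·f`, so `L = K[f]` is closed under
multiplication and commutative. Each `x ⋆ -` with `x ≠ 0` is injective, hence invertible. -/

open Module Submodule

section SpanOnePair

variable {K R : Type*} [Field K] [Ring R] [Algebra K R]

theorem exists_eq_span_one_pair [Nontrivial R] {W : Submodule K R} [FiniteDimensional K W]
    (h1 : (1 : R) ∈ W) (hW : finrank K W = 2) : ∃ f : R, W = span K {1, f} := by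
  have hK1 : finrank K (K ∙ (1 : R)) = 1 := finrank_span_singleton one_ne_zero
  obtain ⟨f, hfW, hf⟩ : ∃ f ∈ W, f ∉ K ∙ (1 : R) := by
    by_contra! h
    have := Submodule.finrank_mono (show W ≤ K ∙ (1 : R) from h)
    omega
  have hle : span K {1, f} ≤ W :=
    span_le.mpr (Set.insert_subset h1 (Set.singleton_subset_iff.mpr hfW))
  have : FiniteDimensional K (span K {1, f}) := Submodule.finiteDimensional_of_le hle
  have hlt : K ∙ (1 : R) < span K {1, f} :=
    lt_of_le_of_ne (span_mono (by simp)) fun h => hf (h ▸ subset_span (by simp))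
  have := Submodule.finrank_lt_finrank_of_lt hlt
  exact ⟨f, (eq_of_le_of_finrank_le hle (by omega)).symm⟩

theorem span_one_pair_mul_le {f : R} (hf : f * f ∈ span K {1, f}) :
    span K {1, f} * span K {1, f} ≤ span K {1, f} := by
  have h1 : (1 : R) ∈ span K {1, f} := subset_span (by simp)
  have hf' : f ∈ span K {1, f} := subset_span (by simp)
  rw [span_mul_span, span_le, Set.mul_subset_iff]
  simp [h1, hf', hf]

theorem commute_of_mem_span_one_pair {f x y : R} (hx : x ∈ span K {1, f})
    (hy : y ∈ span K {1, f}) : Commute x y := by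
  have hle : span K {1, f} ≤ Subalgebra.toSubmodule (Algebra.adjoin K {f}) :=
    span_le.mpr (Set.insert_subset (Algebra.adjoin K {f}).one_mem
      (Set.singleton_subset_iff.mpr (Algebra.self_mem_adjoin_singleton K f)))
  refine Algebra.commute_of_mem_adjoin_of_forall_mem_commute (hle hy) ?_
  simpa using (Algebra.commute_of_mem_adjoin_self (hle hx)).symm

end SpanOnePair

theorem LinearMap.mul_self_mem_span_one_self {K V : Type*} [Field K] [AddCommGroup V]
    [Module K V] [FiniteDimensional K V] (hV : finrank K V = 2) (f : End K V) :
    f * f ∈ span K {1, f} := by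
  have hCH := f.aeval_self_charpoly
  rw [f.charpoly_monic.as_sum, f.charpoly_natDegree, hV] at hCH
  simp only [Finset.sum_range_succ, Finset.sum_range_zero, map_add, map_pow, map_mul,
    Polynomial.aeval_X, Polynomial.aeval_C, Algebra.algebraMap_eq_smul_one, smul_mul_assoc,
    one_mul, pow_zero, pow_one, zero_add, map_one] at hCH
  rw [mem_span_pair]
  refine ⟨-(charpoly f).coeff 0, -(charpoly f).coeff 1, ?_⟩
  rw [← pow_two, eq_neg_of_add_eq_zero_left hCH, neg_add, neg_smul, neg_smul]

theorem stmt_16_general (K A : Type*) [Field K] [AddCommGroup A] [Module K A]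
    [FiniteDimensional K A] [Nontrivial A]
    (star : A →ₗ[K] A →ₗ[K] A)
    (hstar : ∀ x y : A, x ≠ 0 → y ≠ 0 → star x y ≠ 0)
    (q : QuadraticForm K A)
    (hdim : Module.finrank K A = 2)
    (e : A) (he_q : q e = 1) (he_std : ∀ y : A, star e y = y) :
    Function.Injective (fun x : A => (star x : Module.End K A)) ∧
    (∃ x : A, (star x : Module.End K A) = 1) ∧
    (∀ x y : A, ∃ z : A,
      (star x : Module.End K A) * (star y : Module.End K A) = star z) ∧
    (∀ x y : A, (star x : Module.End K A) * (star y : Module.End K A)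
      = (star y : Module.End K A) * (star x : Module.End K A)) ∧
    (∀ x : A, x ≠ 0 → IsUnit (star x : Module.End K A)) := by
  have he : e ≠ 0 := by
    rintro rfl
    simp at he_q
  have hinj : Function.Injective star := (injective_iff_map_eq_zero star).mpr fun x hx =>
    by_contra fun hx0 => hstar x e hx0 he (by rw [hx]; rfl)
  have hone : star e = 1 := LinearMap.ext he_std
  obtain ⟨f, hf⟩ := exists_eq_span_one_pair (W := LinearMap.range star) ⟨e, hone⟩
    (by rw [LinearMap.finrank_range_of_inj hinj, hdim])
  have hmem (x : A) : star x ∈ span K {1, f} := hf ▸ LinearMap.mem_range_self star x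
  have hmul : LinearMap.range star * LinearMap.range star ≤ LinearMap.range star :=
    hf ▸ span_one_pair_mul_le (f.mul_self_mem_span_one_self hdim)
  refine ⟨hinj, ⟨e, hone⟩, fun x y => ?_,
    fun x y => commute_of_mem_span_one_pair (hmem x) (hmem y), fun x hx => ?_⟩
  · obtain ⟨z, hz⟩ := hmul (mul_mem_mul (LinearMap.mem_range_self star x)
      (LinearMap.mem_range_self star y))
    exact ⟨z, hz.symm⟩
  · exact (LinearMap.isUnit_iff_ker_eq_bot _).mpr <| LinearMap.ker_eq_bot'.mpr fun y hy =>
      by_contra fun hy0 => hstar x y hx hy0 hy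

theorem stmt_16 (K A : Type*) [Field K] [AddCommGroup A] [Module K A]
    [FiniteDimensional K A] [Nontrivial A]
    (star bull : A →ₗ[K] A →ₗ[K] A)
    (hstar : ∀ x y : A, x ≠ 0 → y ≠ 0 → star x y ≠ 0)
    (hbull : ∀ x y : A, x ≠ 0 → y ≠ 0 → bull x y ≠ 0)
    (q : QuadraticForm K A)
    (hq : ∀ x y : A, star x (bull x y) = q x • y)
    (hdim : Module.finrank K A = 2)
    (e : A) (he_q : q e = 1) (he_std : ∀ y : A, star e y = y) :
    Function.Injective (fun x : A => (star x : Module.End K A)) ∧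
    (∃ x : A, (star x : Module.End K A) = 1) ∧
    (∀ x y : A, ∃ z : A,
      (star x : Module.End K A) * (star y : Module.End K A) = star z) ∧
    (∀ x y : A, (star x : Module.End K A) * (star y : Module.End K A)
      = (star y : Module.End K A) * (star x : Module.End K A)) ∧
    (∀ x : A, x ≠ 0 → IsUnit (star x : Module.End K A)) :=
  stmt_16_general K A star hstar q hdim e he_q he_std
end

section
/- Let K be a field of characteristic 2 and let (A, ⋆, •) be a 4-dimensional non-degenerate LDB division algebra over K whose attached quadratic form q represents 1. Then the Arf invariant of q is 0; consequently q is equivalent to [1, ab] ⊥ [a, b] for some a, b ∈ K*, i.e. q is equivalent to the norm form of the quaternion algebra C[a,b]. -/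
/-!
A division algebra has no zero divisors, so `q` is anisotropic. Complete `e` with `q e = 1` to a
symplectic basis `e, f, u, v` of `b_q`; then `q ≅ [1, β] ⊥ [a, b]` with `β = q f`, `a = q u`,
`b = q v`, whose Arf invariant is `β + ab`.

To see that `β + ab ∈ ℘(K)`, put `L x = star x ∘ bull e`. Polarizing `star x ∘ bull x = q x` and
`bull x ∘ star x = q x` shows that `P = L u`, `Q = L v` satisfy `P² = a`, `Q² = b`, `PQ + QP = 1`,
i.e. they span a quaternion algebra `H` with norm form `[1, ab] ⊥ [a, b]`, and that
`S = L f + PQ` commutes with `H` and satisfies `S² = S + (β + ab)`. The norm form is anisotropic,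
so `H` acts freely on `e` and, by dimension, `S e = g e` for some `g ∈ H`. Then
`g² = g + (β + ab)` on `e`, while `g² = tr(g) g + N(g)`: `tr g = 1` would give `N(g) = β + ab`,
an isotropic vector of `q`, so `g e` is a multiple `λ e` with `λ² + λ = β + ab`. The shear
`(x, y) ↦ (x + λ y, y)` then turns `[1, β]` into `[1, ab]`.
-/

/-- The binary quadratic form `[a,b] : (x,y) ↦ a x² + x y + b y²`. -/
noncomputable def binQF (K : Type*) [Field K] (a b : K) : QuadraticForm K (K × K) :=
  LinearMap.BilinMap.toQuadraticMap
  ((LinearMap.mk₂ K (fun p r : K × K => a * p.1 * r.1 + p.1 * r.2 + b * p.2 * r.2)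
    (fun p p' r => by simp only [Prod.fst_add, Prod.snd_add]; ring)
    (fun c p r => by simp only [Prod.smul_fst, Prod.smul_snd, smul_eq_mul]; ring)
    (fun p r r' => by simp only [Prod.fst_add, Prod.snd_add]; ring)
    (fun c p r => by
      simp only [Prod.smul_fst, Prod.smul_snd, smul_eq_mul]; ring)) : LinearMap.BilinMap K (K × K) K)

open QuadraticMap LinearMap

section BinaryForms

variable {K : Type*} [Field K]

theorem binQF_apply (a b : K) (p : K × K) :
    binQF K a b p = a * p.1 ^ 2 + p.1 * p.2 + b * p.2 ^ 2 := by
  simp only [binQF, BilinMap.toQuadraticMap_apply, mk₂_apply]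
  ring

theorem binQF_one_equivalent [CharP K 2] (β l : K) :
    (binQF K 1 β).Equivalent (binQF K 1 (β + l ^ 2 + l)) := by
  let shear : (K × K) ≃ₗ[K] K × K :=
    { toFun := fun p => (p.1 + l * p.2, p.2)
      invFun := fun p => (p.1 - l * p.2, p.2)
      map_add' := fun p p' => by ext <;> simp only [Prod.fst_add, Prod.snd_add]; ring
      map_smul' := fun c p => by
        ext <;> simp only [Prod.smul_fst, Prod.smul_snd, smul_eq_mul, RingHom.id_apply]; ring
      left_inv := fun p => by ext <;> simp
      right_inv := fun p => by ext <;> simp }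
  refine ⟨QuadraticMap.IsometryEquiv.symm ⟨shear, fun p => ?_⟩⟩
  simp only [binQF_apply]
  change 1 * (p.1 + l * p.2) ^ 2 + (p.1 + l * p.2) * p.2 + β * p.2 ^ 2 = _
  linear_combination l * p.1 * p.2 * CharTwo.two_eq_zero (R := K)

theorem anisotropic_prod_binQF_one_mul [CharP K 2] {a b β : K}
    (h : ((binQF K 1 β).prod (binQF K a b)).Anisotropic) :
    ((binQF K 1 (a * b)).prod (binQF K a b)).Anisotropic := by
  have key : ∀ s g k : K, s ^ 2 + (a * g ^ 2 + g * k + b * k ^ 2) = 0 →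
      s = 0 ∧ g = 0 ∧ k = 0 := by
    intro s g k hs
    have := h ((s, 0), (g, k)) (by simpa [binQF_apply] using hs)
    simp_all [Prod.ext_iff]
  have ha : a ≠ 0 := fun ha => by simpa using key 0 1 0 (by simp [ha])
  rintro ⟨⟨w, z⟩, x, y⟩ hN
  simp only [QuadraticMap.prod_apply, binQF_apply] at hN
  -- multiplicativity of the quaternion norm: `[a,b](x,y) · N = d² + [a,b](X,Y)` for
  -- `d = [a,b](x,y)` and the `X`, `Y` below
  obtain ⟨hd, -, -⟩ := key (a * x ^ 2 + x * y + b * y ^ 2) (x * w + b * z * y)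
    (a * x * z + y * w + y * z) (by
      linear_combination (a * x ^ 2 + x * y + b * y ^ 2) * hN +
        (2 * a * b * w * x * y * z + a * b * x * y * z ^ 2 + b * w * y ^ 2 * z +
          b * y ^ 2 * z ^ 2) * CharTwo.two_eq_zero (R := K))
  obtain ⟨-, rfl, rfl⟩ := key 0 x y (by linear_combination hd)
  obtain ⟨-, rfl, haz⟩ := key 0 w (a * z) (by linear_combination a * hN)
  simp [(mul_eq_zero.mp haz).resolve_left ha]

end BinaryForms

theorem QuadraticMap.Equivalent.anisotropic {R M M' N : Type*} [CommSemiring R]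
    [AddCommMonoid M] [AddCommMonoid M'] [AddCommMonoid N] [Module R M] [Module R M']
    [Module R N] {Q : QuadraticMap R M N} {Q' : QuadraticMap R M' N} (h : Q.Equivalent Q')
    (hQ : Q.Anisotropic) : Q'.Anisotropic := by
  obtain ⟨φ⟩ := h
  intro x hx
  have := hQ (φ.symm x) (by rw [φ.symm.map_app]; exact hx)
  simpa using this

section Frame

variable {K A : Type*} [Field K] [AddCommGroup A] [Module K A]

variable (K) in
def linearCombinationProd (x₁ x₂ y₁ y₂ : A) : (K × K) × (K × K) →ₗ[K] A :=
  ((toSpanSingleton K A x₁).coprod (toSpanSingleton K A x₂)).coprod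
    ((toSpanSingleton K A y₁).coprod (toSpanSingleton K A y₂))

@[simp]
theorem linearCombinationProd_apply (x₁ x₂ y₁ y₂ : A) (r : (K × K) × (K × K)) :
    linearCombinationProd K x₁ x₂ y₁ y₂ r =
      r.1.1 • x₁ + r.1.2 • x₂ + (r.2.1 • y₁ + r.2.2 • y₂) := by
  simp [linearCombinationProd]

theorem polar_linearCombinationProd (q : QuadraticForm K A) (x x₁ x₂ y₁ y₂ : A)
    (r : (K × K) × (K × K)) :
    polar q x (linearCombinationProd K x₁ x₂ y₁ y₂ r) =
      r.1.1 * polar q x x₁ + r.1.2 * polar q x x₂ + r.2.1 * polar q x y₁ +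
        r.2.2 * polar q x y₂ := by
  simp only [linearCombinationProd_apply, polar_add_right, polar_smul_right, smul_eq_mul]
  ring

theorem polar_self_eq_zero [CharP K 2] (q : QuadraticForm K A) (x : A) : polar q x x = 0 := by
  rw [polar_self, two_smul, CharTwo.add_self_eq_zero]

theorem exists_polar_eq_one {q : QuadraticForm K A} (hnd : ∀ x, (∀ y, polar q x y = 0) → x = 0)
    {x : A} (hx : x ≠ 0) : ∃ y, polar q x y = 1 := by
  obtain ⟨y, hy⟩ : ∃ y, polar q x y ≠ 0 := by
    by_contra! h
    exact hx (hnd x h)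
  exact ⟨(polar q x y)⁻¹ • y, by rw [polar_smul_right, smul_eq_mul, inv_mul_cancel₀ hy]⟩

structure IsSymplecticFrame (q : QuadraticForm K A) (e f u v : A) : Prop where
  polar_e_f : polar q e f = 1
  polar_u_v : polar q u v = 1
  polar_e_u : polar q e u = 0
  polar_e_v : polar q e v = 0
  polar_f_u : polar q f u = 0
  polar_f_v : polar q f v = 0

theorem exists_isSymplecticFrame [CharP K 2] [FiniteDimensional K A] {q : QuadraticForm K A}
    (hnd : ∀ x, (∀ y, polar q x y = 0) → x = 0) (hdim : 2 < Module.finrank K A) {e : A}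
    (he : e ≠ 0) : ∃ f u v, IsSymplecticFrame q e f u v := by
  obtain ⟨f, hef⟩ := exists_polar_eq_one hnd he
  obtain ⟨u, hu, hu0⟩ := (Submodule.ne_bot_iff _).mp <|
    ker_ne_bot_of_finrank_lt (f := (polarBilin q e).prod (polarBilin q f)) (by simpa using hdim)
  simp only [mem_ker, LinearMap.prod_apply, Function.prod, polarBilin_apply_apply,
    Prod.mk_eq_zero] at hu
  obtain ⟨w, huw⟩ := exists_polar_eq_one hnd hu0
  -- project `w` onto the orthogonal complement of the hyperbolic plane spanned by `e`, `f`
  refine ⟨f, u, w - polar q f w • e - polar q e w • f, ⟨hef, ?_, hu.1, ?_, hu.2, ?_⟩⟩ <;>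
    simp only [polar_sub_right, polar_smul_right, smul_eq_mul, polar_self_eq_zero, hef,
      polar_comm q f e, polar_comm q u e, polar_comm q u f, hu, huw]
  all_goals ring

namespace IsSymplecticFrame

variable {q : QuadraticForm K A} {e f u v : A}

theorem apply_linearCombinationProd (h : IsSymplecticFrame q e f u v) (r : (K × K) × (K × K)) :
    q (linearCombinationProd K e f u v r) =
      ((binQF K (q e) (q f)).prod (binQF K (q u) (q v))) r := by
  simp only [linearCombinationProd_apply, QuadraticMap.map_add q, QuadraticMap.map_smul,
    polar_add_left, polar_add_right, polar_smul_left, polar_smul_right, smul_eq_mul,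
    h.polar_e_f, h.polar_u_v, h.polar_e_u, h.polar_e_v, h.polar_f_u, h.polar_f_v,
    QuadraticMap.prod_apply, binQF_apply]
  ring

theorem linearCombinationProd_injective [CharP K 2] (h : IsSymplecticFrame q e f u v) :
    Function.Injective (linearCombinationProd K e f u v) := by
  rw [← ker_eq_bot, ker_eq_bot']
  intro r hr
  have hpolar := fun x => (polar_linearCombinationProd q x e f u v r).symm
  simp only [hr, polar_zero_right] at hpolar
  have h₁ := hpolar f
  have h₂ := hpolar e
  have h₃ := hpolar v
  have h₄ := hpolar u
  simp only [polar_self_eq_zero, h.polar_e_f, h.polar_u_v, h.polar_e_u, h.polar_e_v,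
    h.polar_f_u, h.polar_f_v, polar_comm q f e, polar_comm q u e, polar_comm q u f,
    polar_comm q v e, polar_comm q v f, polar_comm q v u, mul_zero, mul_one, add_zero,
    zero_add] at h₁ h₂ h₃ h₄
  ext <;> assumption

theorem equivalent [CharP K 2] [FiniteDimensional K A] (h : IsSymplecticFrame q e f u v)
    (hdim : Module.finrank K A = 4) :
    q.Equivalent ((binQF K (q e) (q f)).prod (binQF K (q u) (q v))) := by
  have hbij : Function.Bijective (linearCombinationProd K e f u v) :=
    ⟨h.linearCombinationProd_injective,
      (injective_iff_surjective_of_finrank_eq_finrank (by simp [hdim])).mp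
        h.linearCombinationProd_injective⟩
  exact ⟨QuadraticMap.IsometryEquiv.symm
    ⟨LinearEquiv.ofBijective _ hbij, h.apply_linearCombinationProd⟩⟩

end IsSymplecticFrame

end Frame

section Quaternion

variable {K R : Type*} [Field K] [Ring R] [Algebra K R] {a b β : K} {P Q M : R}

structure IsQuaternionPair (a b : K) (P Q : R) : Prop where
  mul_self_left : P * P = a • 1
  mul_self_right : Q * Q = b • 1
  anticomm : P * Q + Q * P = 1

namespace IsQuaternionPair

theorem right_mul_left (h : IsQuaternionPair a b P Q) : Q * P = 1 - P * Q :=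
  eq_sub_of_add_eq' h.anticomm

theorem left_mul_left_mul (h : IsQuaternionPair a b P Q) (x : R) : P * (P * x) = a • x := by
  rw [← mul_assoc, h.mul_self_left, smul_mul_assoc, one_mul]

theorem mul_right_mul_right (h : IsQuaternionPair a b P Q) (x : R) : x * Q * Q = b • x := by
  rw [mul_assoc, h.mul_self_right, mul_smul_comm, mul_one]

theorem mul_mul_left (h : IsQuaternionPair a b P Q) : P * Q * P = P - a • Q := by
  rw [mul_assoc, h.right_mul_left, mul_sub, mul_one, h.left_mul_left_mul]

theorem right_mul_mul (h : IsQuaternionPair a b P Q) : Q * (P * Q) = Q - b • P := by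
  rw [← mul_assoc, h.right_mul_left, sub_mul, one_mul, h.mul_right_mul_right]

theorem mul_mul_self (h : IsQuaternionPair a b P Q) :
    P * Q * (P * Q) = P * Q - (a * b) • 1 := by
  rw [← mul_assoc, h.mul_mul_left, sub_mul, smul_mul_assoc, h.mul_self_right, smul_smul]

variable [CharP K 2]

theorem linearCombinationProd_mul_self (h : IsQuaternionPair a b P Q) (r : (K × K) × (K × K)) :
    linearCombinationProd K 1 (P * Q) P Q r * linearCombinationProd K 1 (P * Q) P Q r =
      r.1.2 • linearCombinationProd K 1 (P * Q) P Q r +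
        ((binQF K 1 (a * b)).prod (binQF K a b)) r • 1 := by
  simp only [linearCombinationProd_apply, QuadraticMap.prod_apply, binQF_apply, add_mul,
    mul_add, smul_mul_assoc, mul_smul_comm, smul_smul, one_mul, mul_one, h.mul_self_left,
    h.mul_self_right, h.right_mul_left, h.left_mul_left_mul, h.mul_right_mul_right,
    h.mul_mul_left, h.right_mul_mul, h.mul_mul_self]
  match_scalars <;> grind

theorem commute_add_mul_left (h : IsQuaternionPair a b P Q) (hMP : M * P + P * M = P) :
    Commute (M + P * Q) P := by
  rw [Commute, SemiconjBy, add_mul, mul_add, eq_sub_of_add_eq hMP, h.mul_mul_left,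
    h.left_mul_left_mul]
  match_scalars <;> grind

theorem commute_add_mul_right (h : IsQuaternionPair a b P Q) (hMQ : M * Q + Q * M = Q) :
    Commute (M + P * Q) Q := by
  rw [Commute, SemiconjBy, add_mul, mul_add, eq_sub_of_add_eq hMQ, h.mul_right_mul_right,
    h.right_mul_mul]
  match_scalars <;> grind

theorem add_mul_mul_self (h : IsQuaternionPair a b P Q) (hM : M * M = M + β • 1)
    (hMP : M * P + P * M = P) (hMQ : M * Q + Q * M = Q) :
    (M + P * Q) * (M + P * Q) = (M + P * Q) + (β + a * b) • 1 := by
  have hMPQ : M * (P * Q) = P * Q * M := by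
    rw [← mul_assoc, eq_sub_of_add_eq hMP, sub_mul, mul_assoc, eq_sub_of_add_eq hMQ, mul_sub,
      ← mul_assoc, sub_sub_cancel]
  rw [add_mul, mul_add, mul_add, hM, hMPQ, h.mul_mul_self]
  match_scalars <;> grind

end IsQuaternionPair

end Quaternion

section Module

variable {K A : Type*} [Field K] [CharP K 2] [AddCommGroup A] [Module K A] {a b β : K}
  {P Q : Module.End K A}

theorem sq_add_self_eq_of_apply_eq_smul {S : Module.End K A} {c μ : K}
    (hS : S * S = S + c • 1) {e : A} (he : e ≠ 0) (hSe : S e = μ • e) : μ ^ 2 + μ = c := by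
  refine smul_left_injective K he ?_
  have hSSe := congrArg (· e) hS
  simp only [Module.End.mul_apply, hSe, map_smul, smul_smul, LinearMap.add_apply,
    LinearMap.smul_apply, Module.End.one_apply] at hSSe
  linear_combination (norm := module) hSSe + CharTwo.two_eq_zero (R := K) • (μ • e)

theorem IsQuaternionPair.injective_applyₗ_comp (h : IsQuaternionPair a b P Q)
    (hN : ((binQF K 1 (a * b)).prod (binQF K a b)).Anisotropic) {e : A} (he : e ≠ 0) :
    Function.Injective ((applyₗ e).comp (linearCombinationProd K 1 (P * Q) P Q)) := by
  rw [← ker_eq_bot, ker_eq_bot']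
  intro r hr
  rw [LinearMap.comp_apply, applyₗ_apply_apply] at hr
  have hsq := congrArg (· e) (h.linearCombinationProd_mul_self r)
  simp only [Module.End.mul_apply, hr, map_zero, LinearMap.add_apply, LinearMap.smul_apply,
    Module.End.one_apply, smul_zero, zero_add] at hsq
  exact hN r ((smul_eq_zero.mp hsq.symm).resolve_right he)

theorem IsQuaternionPair.exists_sq_add_self_eq [FiniteDimensional K A]
    (hdim : Module.finrank K A = 4) (h : IsQuaternionPair a b P Q) {S : Module.End K A}
    (hSP : Commute S P) (hSQ : Commute S Q) (hS : S * S = S + (β + a * b) • 1)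
    (hanis : ((binQF K 1 β).prod (binQF K a b)).Anisotropic) {e : A} (he : e ≠ 0) :
    ∃ l : K, l ^ 2 + l = β + a * b := by
  have hinj := h.injective_applyₗ_comp (anisotropic_prod_binQF_one_mul hanis) he
  -- `e` generates `A` as a module over the quaternion algebra, so `S e = g e` for some `g` in it
  obtain ⟨r, hr⟩ := (injective_iff_surjective_of_finrank_eq_finrank (by simp [hdim])).mp
    hinj (S e)
  rw [LinearMap.comp_apply, applyₗ_apply_apply] at hr
  have hsq := h.linearCombinationProd_mul_self r
  have hSg : Commute S (linearCombinationProd K 1 (P * Q) P Q r) := by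
    simp only [linearCombinationProd_apply]
    exact (((Commute.one_right S).smul_right _).add_right
      ((hSP.mul_right hSQ).smul_right _)).add_right
      ((hSP.smul_right _).add_right (hSQ.smul_right _))
  set g := linearCombinationProd K 1 (P * Q) P Q r
  set N := ((binQF K 1 (a * b)).prod (binQF K a b)) r
  have hge : r.1.2 • g e + N • e = g e + (β + a * b) • e := by
    calc _ = (g * g) e := by simp [hsq]
      _ = (S * S) e := by rw [Module.End.mul_apply, hr, ← Module.End.mul_apply, ← hSg.eq,
        Module.End.mul_apply, hr, Module.End.mul_apply]
      _ = _ := by simp [hS, hr]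
  by_cases hz : r.1.2 = 1
  · rw [hz, one_smul, add_right_inj] at hge
    have hN : N = β + a * b := smul_left_injective K he hge
    have h0 := hanis ((r.1.1, 1), r.2) (by
      simp only [N, QuadraticMap.prod_apply, binQF_apply, hz] at hN ⊢
      linear_combination hN + β * CharTwo.two_eq_zero (R := K))
    simp [Prod.ext_iff] at h0
  · have hSe : S e = ((N - (β + a * b)) / (1 - r.1.2)) • e := by
      have h1 : (1 - r.1.2) • g e = (N - (β + a * b)) • e := by
        linear_combination (norm := module) -hge
      rw [← hr, div_eq_inv_mul, mul_smul, ← h1, smul_smul,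
        inv_mul_cancel₀ (sub_ne_zero.mpr (Ne.symm hz)), one_smul]
    exact ⟨_, sq_add_self_eq_of_apply_eq_smul hS he hSe⟩

end Module

section LDB

variable {K A : Type*} [Field K] [AddCommGroup A] [Module K A]
  {star bull : A →ₗ[K] A →ₗ[K] A} {q : QuadraticForm K A}

theorem anisotropic_of_ldb [Nontrivial A] (hstar : ∀ x y : A, x ≠ 0 → y ≠ 0 → star x y ≠ 0)
    (hbull : ∀ x y : A, x ≠ 0 → y ≠ 0 → bull x y ≠ 0)
    (hq : ∀ x y : A, star x (bull x y) = q x • y) : q.Anisotropic := by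
  intro x hx
  by_contra hx0
  obtain ⟨y, hy⟩ := exists_ne (0 : A)
  exact hstar x _ hx0 (hbull x y hx0 hy) (by rw [hq, hx, zero_smul])

theorem mul_add_mul_eq_polar_smul_one {R : Type*} [Ring R] [Algebra K R] {F G : A →ₗ[K] R}
    (h : ∀ x, F x * G x = q x • 1) (x z : A) : F x * G z + F z * G x = polar q x z • 1 := by
  have hxz := h (x + z)
  rw [map_add, map_add, add_mul, mul_add, mul_add, h x, h z] at hxz
  rw [QuadraticMap.polar, sub_smul, sub_smul, ← hxz]
  abel

theorem star_mul_bull_self (hq : ∀ x y : A, star x (bull x y) = q x • y) (x : A) :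
    (star x : Module.End K A) * bull x = q x • 1 := by
  ext y
  simp [hq]

theorem bull_mul_star_self [FiniteDimensional K A]
    (hq : ∀ x y : A, star x (bull x y) = q x • y) (hanis : q.Anisotropic) (x : A) :
    (bull x : Module.End K A) * star x = q x • 1 := by
  by_cases hx : x = 0
  · simp [hx]
  have hqx : q x ≠ 0 := fun h => hx (hanis x h)
  have hinv : ((q x)⁻¹ • (star x : Module.End K A)) * bull x = 1 := by
    rw [smul_mul_assoc, star_mul_bull_self hq, smul_smul, inv_mul_cancel₀ hqx, one_smul]
  calc (bull x : Module.End K A) * star x = q x • (bull x * ((q x)⁻¹ • star x)) := by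
        rw [mul_smul_comm, smul_smul, mul_inv_cancel₀ hqx, one_smul]
    _ = q x • 1 := by rw [mul_eq_one_comm.mp hinv]

theorem star_mul_bull_mul_star_mul_bull (hq : ∀ x y : A, star x (bull x y) = q x • y)
    (e x z : A) :
    (star x : Module.End K A) * bull e * (star z * bull e) =
      polar q x e • (star z * bull e) - star e * (bull x * star z) * bull e := by
  rw [eq_sub_of_add_eq (mul_add_mul_eq_polar_smul_one (star_mul_bull_self hq) x e), sub_mul,
    smul_mul_assoc, one_mul]
  simp only [mul_assoc]

theorem star_mul_bull_mul_self [FiniteDimensional K A]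
    (hq : ∀ x y : A, star x (bull x y) = q x • y) (hanis : q.Anisotropic) {e : A}
    (he : q e = 1) (x : A) :
    (star x : Module.End K A) * bull e * (star x * bull e) =
      polar q x e • (star x * bull e) - q x • 1 := by
  rw [star_mul_bull_mul_star_mul_bull hq, bull_mul_star_self hq hanis, mul_smul_comm, mul_one,
    smul_mul_assoc, star_mul_bull_self hq, he, one_smul]

theorem star_mul_bull_anticomm [FiniteDimensional K A]
    (hq : ∀ x y : A, star x (bull x y) = q x • y) (hanis : q.Anisotropic) {e : A}
    (he : q e = 1) (x z : A) :
    (star x : Module.End K A) * bull e * (star z * bull e) +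
        star z * bull e * (star x * bull e) =
      polar q x e • (star z * bull e) + polar q z e • (star x * bull e) - polar q x z • 1 := by
  have hsum : (star e : Module.End K A) * (bull x * star z) * bull e +
      star e * (bull z * star x) * bull e = polar q x z • 1 := by
    rw [← add_mul, ← mul_add, mul_add_mul_eq_polar_smul_one (bull_mul_star_self hq hanis),
      mul_smul_comm, mul_one, smul_mul_assoc, star_mul_bull_self hq, he, one_smul]
  rw [star_mul_bull_mul_star_mul_bull hq, star_mul_bull_mul_star_mul_bull hq, ← hsum]
  abel

end LDB

theorem IsSymplecticFrame.exists_sq_add_self_eq_of_ldb {K A : Type*} [Field K] [CharP K 2]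
    [AddCommGroup A] [Module K A] [FiniteDimensional K A] (hdim : Module.finrank K A = 4)
    {star bull : A →ₗ[K] A →ₗ[K] A} {q : QuadraticForm K A}
    (hq : ∀ x y : A, star x (bull x y) = q x • y) (hanis : q.Anisotropic) {e f u v : A}
    (he : q e = 1) (hframe : IsSymplecticFrame q e f u v) :
    ∃ l : K, l ^ 2 + l = q f + q u * q v := by
  have hsq := star_mul_bull_mul_self hq hanis he
  have hanti := star_mul_bull_anticomm hq hanis he
  have hpair : IsQuaternionPair (q u) (q v) (star u * bull e) (star v * bull e) := by
    refine ⟨?_, ?_, ?_⟩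
    · rw [hsq, polar_comm, hframe.polar_e_u, zero_smul, zero_sub, ← neg_smul, CharTwo.neg_eq]
    · rw [hsq, polar_comm, hframe.polar_e_v, zero_smul, zero_sub, ← neg_smul, CharTwo.neg_eq]
    · rw [hanti, polar_comm q u e, polar_comm q v e, hframe.polar_e_u, hframe.polar_e_v,
        hframe.polar_u_v, zero_smul, zero_smul, zero_add, zero_sub, ← neg_smul, CharTwo.neg_eq,
        one_smul]
  have hM : (star f : Module.End K A) * bull e * (star f * bull e) =
      star f * bull e + q f • 1 := by
    rw [hsq, polar_comm, hframe.polar_e_f, one_smul, sub_eq_add_neg, ← neg_smul, CharTwo.neg_eq]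
  have hMP : (star f : Module.End K A) * bull e * (star u * bull e) +
      star u * bull e * (star f * bull e) = star u * bull e := by
    rw [hanti, polar_comm q f e, polar_comm q u e, hframe.polar_e_f, hframe.polar_e_u,
      hframe.polar_f_u, one_smul, zero_smul, zero_smul, add_zero, sub_zero]
  have hMQ : (star f : Module.End K A) * bull e * (star v * bull e) +
      star v * bull e * (star f * bull e) = star v * bull e := by
    rw [hanti, polar_comm q f e, polar_comm q v e, hframe.polar_e_f, hframe.polar_e_v,
      hframe.polar_f_v, one_smul, zero_smul, zero_smul, add_zero, sub_zero]
  have he0 : e ≠ 0 := by rintro rfl; simp at he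
  have hequiv := hframe.equivalent hdim
  rw [he] at hequiv
  exact hpair.exists_sq_add_self_eq hdim (hpair.commute_add_mul_left hMP)
    (hpair.commute_add_mul_right hMQ) (hpair.add_mul_mul_self hM hMP hMQ)
    (hequiv.anisotropic hanis) he0

theorem stmt_18 (K A : Type*) [Field K] [AddCommGroup A] [Module K A]
    [FiniteDimensional K A] [Nontrivial A] [CharP K 2]
    (star bull : A →ₗ[K] A →ₗ[K] A)
    (hstar : ∀ x y : A, x ≠ 0 → y ≠ 0 → star x y ≠ 0)
    (hbull : ∀ x y : A, x ≠ 0 → y ≠ 0 → bull x y ≠ 0)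
    (q : QuadraticForm K A)
    (hq : ∀ x y : A, star x (bull x y) = q x • y)
    (hnd : ∀ x : A, (∀ y : A, QuadraticMap.polar ⇑q x y = 0) → x = 0)
    (hdim : Module.finrank K A = 4)
    (hrep : ∃ e : A, q e = 1) :
    ∃ a b : K, a ≠ 0 ∧ b ≠ 0 ∧
      QuadraticMap.Equivalent q
        ((binQF K 1 (a * b)).prod (binQF K a b)) := by
  have hanis := anisotropic_of_ldb hstar hbull hq
  obtain ⟨e, he⟩ := hrep
  have he0 : e ≠ 0 := by rintro rfl; simp at he
  obtain ⟨f, u, v, hframe⟩ := exists_isSymplecticFrame hnd (by omega) he0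
  obtain ⟨l, hl⟩ := hframe.exists_sq_add_self_eq_of_ldb hdim hq hanis he
  have hu : u ≠ 0 := by rintro rfl; simpa using hframe.polar_u_v
  have hv : v ≠ 0 := by rintro rfl; simpa using hframe.polar_u_v
  refine ⟨q u, q v, fun h => hu (hanis u h), fun h => hv (hanis v h), ?_⟩
  have hβ : q f + l ^ 2 + l = q u * q v := by
    linear_combination hl + q f * CharTwo.two_eq_zero (R := K)
  have hequiv := hframe.equivalent hdim
  rw [he] at hequiv
  exact hβ ▸ hequiv.trans ((binQF_one_equivalent (q f) l).prod (.refl _))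
end

section
/- Let (A, ⋆) be a finite-dimensional division algebra over K admitting a bilinear quasi-left-inversion. Then (A, ⋆) is isotopic to its reverse algebra (A, ⋆ᵒᵖ), where x ⋆ᵒᵖ y := y ⋆ x; in particular ⋆ᵒᵖ also admits a bilinear quasi-left-inversion. -/
/-!
A quasi-left-inversion gives `x ⋆ (x • y) = Q x • y` for a quadratic form `Q`, anisotropic since
`⋆` is regular. For `e ≠ 0` the isotope `x ∘ y = (R_e⁻¹ x) ⋆ (L_e⁻¹ y)` has unit `e ⋆ e`, and
polarizing `L_x ∘ bull x = Q x` shows that its left multiplications satisfy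
`L_x² = T x • L_x - N x` with `T` linear and `N` quadratic. In a unital division algebra with this
property `T (x ∘ y) = T x T y - polar N x y`, so `x ↦ T x • 1 - x` is an anti-automorphism: `∘`,
and hence `⋆`, is isotopic to its reverse. Quasi-left-inversions transport along isotopies.
-/

section

open Module Submodule QuadraticMap

variable {K A : Type*} [Field K] [AddCommGroup A] [Module K A]

def IsQuasiLeftInversion (star bull : A →ₗ[K] A →ₗ[K] A) : Prop :=
  ∀ x y : A, x ≠ 0 → y ≠ 0 → bull x y ≠ 0 ∧ ∃ c : K, star x (bull x y) = c • y

def IsIsotopic (star circ : A →ₗ[K] A →ₗ[K] A) : Prop :=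
  ∃ f g h : A ≃ₗ[K] A, ∀ x y : A, star x y = h.symm (circ (f x) (g y))

theorem LinearMap.exists_eq_smul_id_of_forall_eq_smul {f : A →ₗ[K] A}
    (h : ∀ y ≠ 0, ∃ k : K, f y = k • y) : ∃ k : K, f = k • 1 := by
  refine exists_eq_smul_id_of_forall_notLinearIndependent fun y hy ↦ ?_
  rcases eq_or_ne y 0 with rfl | hy0
  · exact hy.ne_zero 0 rfl
  obtain ⟨k, hk⟩ := h y hy0
  have := LinearIndependent.pair_iff.mp hy k (-1) (by simp [hk])
  simp at this

section Regular

variable {star : A →ₗ[K] A →ₗ[K] A}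

theorem injective_of_forall_mul_ne_zero (hstar : ∀ x y : A, x ≠ 0 → y ≠ 0 → star x y ≠ 0)
    {x : A} (hx : x ≠ 0) : Function.Injective (star x) :=
  (injective_iff_map_eq_zero _).mpr fun y h ↦ by_contra fun hy ↦ hstar x y hx hy h

theorem injective_flip_of_forall_mul_ne_zero (hstar : ∀ x y : A, x ≠ 0 → y ≠ 0 → star x y ≠ 0)
    {y : A} (hy : y ≠ 0) : Function.Injective (star.flip y) :=
  (injective_iff_map_eq_zero _).mpr fun x h ↦ by_contra fun hx ↦ hstar x y hx hy h

end Regular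

namespace IsQuasiLeftInversion

variable {star bull : A →ₗ[K] A →ₗ[K] A}

theorem exists_quadraticForm [Nontrivial A] (hbull : IsQuasiLeftInversion star bull) :
    ∃ Q : QuadraticForm K A, ∀ x y, star x (bull x y) = Q x • y := by
  have hscalar : ∀ x, ∃ k : K, (star x).comp (bull x) = k • 1 := by
    intro x
    rcases eq_or_ne x 0 with rfl | hx
    · exact ⟨0, by simp⟩
    · exact LinearMap.exists_eq_smul_id_of_forall_eq_smul fun y hy ↦ (hbull x y hx hy).2
  choose c hc using hscalar
  obtain ⟨e, he⟩ := exists_ne (0 : A)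
  obtain ⟨φ, hφ⟩ := Projective.exists_dual_eq_one K he
  refine ⟨LinearMap.BilinMap.toQuadraticMap ((star.compl₂ (bull.flip e)).compr₂ φ), fun x y ↦ ?_⟩
  have hcx : ∀ y, star x (bull x y) = c x • y := fun y ↦ by
    simpa using LinearMap.congr_fun (hc x) y
  simp [hcx, hφ]

end IsQuasiLeftInversion

section QuasiInverse

variable {star bull : A →ₗ[K] A →ₗ[K] A} {Q : QuadraticForm K A}

theorem QuadraticMap.anisotropic_of_mul_quasiInv [Nontrivial A]
    (hstar : ∀ x y : A, x ≠ 0 → y ≠ 0 → star x y ≠ 0) (hbull : IsQuasiLeftInversion star bull)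
    (hQ : ∀ x y, star x (bull x y) = Q x • y) : Q.Anisotropic := by
  intro x hx
  by_contra hx0
  obtain ⟨y, hy⟩ := exists_ne (0 : A)
  exact hstar x _ hx0 (hbull x y hx0 hy).1 (by rw [hQ, hx, zero_smul])

theorem quasiInv_mul (hstar : ∀ x y : A, x ≠ 0 → y ≠ 0 → star x y ≠ 0)
    (hQ : ∀ x y, star x (bull x y) = Q x • y) (x y : A) : bull x (star x y) = Q x • y := by
  rcases eq_or_ne x 0 with rfl | hx
  · simp
  · exact injective_of_forall_mul_ne_zero hstar hx (by rw [hQ, map_smul])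

theorem mul_quasiInv_add_mul_quasiInv (hQ : ∀ x y, star x (bull x y) = Q x • y) (x y w : A) :
    star x (bull y w) + star y (bull x w) = polar Q x y • w := by
  rw [polar, sub_smul, sub_smul, ← hQ, ← hQ, ← hQ]
  simp only [map_add, LinearMap.add_apply]
  abel

theorem mul_quasiInv_mul (hstar : ∀ x y : A, x ≠ 0 → y ≠ 0 → star x y ≠ 0)
    (hQ : ∀ x y, star x (bull x y) = Q x • y) (e x w : A) :
    star e (bull x (star e w)) = polar Q x e • star e w - Q e • star x w := by
  rw [← mul_quasiInv_add_mul_quasiInv hQ, quasiInv_mul hstar hQ, map_smul, add_sub_cancel_left]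

end QuasiInverse

structure IsQuadraticUnital (M : A →ₗ[K] A →ₗ[K] A) (one : A) (T : A →ₗ[K] K)
    (N : QuadraticForm K A) : Prop where
  one_mul : ∀ y, M one y = y
  mul_one : ∀ x, M x one = x
  trace_one : T one = 2
  mul_mul_self_left : ∀ x y, M x (M x y) = T x • M x y - N x • y

namespace IsQuadraticUnital

variable {M : A →ₗ[K] A →ₗ[K] A} {one : A} {T : A →ₗ[K] K} {N : QuadraticForm K A}

theorem mul_self (hM : IsQuadraticUnital M one T N) (x : A) : M x x = T x • x - N x • one := by
  simpa [hM.mul_one] using hM.mul_mul_self_left x one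

theorem mul_add_mul_swap (hM : IsQuadraticUnital M one T N) (x y : A) :
    M x y + M y x = T x • y + T y • x - polar N x y • one := by
  have h := hM.mul_self (x + y)
  simp only [map_add, LinearMap.add_apply, hM.mul_self] at h
  rw [polar]
  linear_combination (norm := module) h

theorem mul_mul_add_mul_mul (hM : IsQuadraticUnital M one T N) (x y v : A) :
    M x (M y v) + M y (M x v) = T y • M x v + T x • M y v - polar N x y • v := by
  have h := hM.mul_mul_self_left (x + y) v
  simp only [map_add, LinearMap.add_apply, hM.mul_mul_self_left] at h
  rw [polar]
  linear_combination (norm := module) h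

theorem polar_one_right (hM : IsQuadraticUnital M one T N) (x : A) : polar N x one = T x := by
  rcases eq_or_ne one 0 with h0 | h0
  · obtain rfl : x = 0 := by simpa [h0] using (hM.one_mul x).symm
    simp
  have h := hM.mul_add_mul_swap x one
  rw [hM.mul_one, hM.one_mul, hM.trace_one] at h
  have : (T x - polar N x one) • one = 0 := by linear_combination (norm := module) -h
  exact (sub_eq_zero.mp ((smul_eq_zero.mp this).resolve_right h0)).symm

theorem trace_mul_add_trace_mul_swap (hM : IsQuadraticUnital M one T N) (x y : A) :
    T (M x y) + T (M y x) = 2 * (T x * T y) - 2 * polar N x y := by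
  rw [← map_add, hM.mul_add_mul_swap]
  simp only [map_sub, map_add, map_smul, hM.trace_one, smul_eq_mul]
  ring

theorem mul_notMem_span (hM : IsQuadraticUnital M one T N)
    (hdiv : ∀ x y, x ≠ 0 → y ≠ 0 → M x y ≠ 0) {u w : A} (hu : u ∉ K ∙ one)
    (hw : w ∉ span K {one, u}) : M u w ∉ span K {one, u, w} := by
  rw [mem_span_triple]
  rintro ⟨α, β, γ, hz⟩
  -- The `w`-coefficient of `u (u w) = T u • u w - N u • w` makes `(u - γ) (u - (T u - γ)) = 0`.
  have E := hM.mul_mul_self_left u w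
  simp only [← hz, map_add, map_smul, hM.mul_one, hM.mul_self] at E
  have hγ : γ * γ - T u * γ + N u = 0 := by
    by_contra hne
    refine hw ((smul_mem_iff _ hne).mp
      (mem_span_pair.mpr ⟨T u * α + β * N u - γ * α, -α - γ * β, ?_⟩))
    linear_combination (norm := module) -E
  have hu' : u - γ • one ≠ 0 := fun h ↦ hu (mem_span_singleton.mpr ⟨γ, (sub_eq_zero.mp h).symm⟩)
  have hu'' : u - (T u - γ) • one ≠ 0 :=
    fun h ↦ hu (mem_span_singleton.mpr ⟨T u - γ, (sub_eq_zero.mp h).symm⟩)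
  refine hdiv _ _ hu' hu'' ?_
  simp only [map_sub, map_smul, LinearMap.sub_apply, LinearMap.smul_apply, hM.mul_one, hM.one_mul,
    hM.mul_self]
  linear_combination (norm := module) (-hγ) • one

theorem trace_mul_of_trace_eq_zero (hM : IsQuadraticUnital M one T N)
    (hdiv : ∀ x y, x ≠ 0 → y ≠ 0 → M x y ≠ 0) {u w : A} (hu : u ∉ K ∙ one)
    (hw : w ∉ span K {one, u}) (hTw : T w = 0) : T (M u w) = -polar N u w := by
  set z := M u w with hz
  have hww : M w w = -(N w • one) := by rw [hM.mul_self, hTw, zero_smul, zero_sub]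
  have hwz : M w z = N w • u - polar N u w • w - (T u * N w) • one := by
    have h := hM.mul_mul_add_mul_mul w u w
    rw [← hz, hww, hTw, polar_comm, map_neg, map_smul, hM.mul_one] at h
    linear_combination (norm := module) h
  have hzw : M z w = (T z + polar N u w) • w + (T u * N w - polar N z w) • one - N w • u := by
    have h := hM.mul_add_mul_swap z w
    rw [hTw, hwz] at h
    linear_combination (norm := module) h
  have huzw : M u (M z w) = (T z + polar N u w) • z - polar N z w • u + (N w * N u) • one := by
    rw [hzw]
    simp only [map_add, map_sub, map_smul, hM.mul_one, hM.mul_self, ← hz]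
    module
  have hzz : M z z = -polar N u w • z + (polar N z w - T u * N w) • u
      + (T u * (T z + polar N u w) - polar N z u) • w
      + (T u * (T u * N w - polar N z w) - N w * N u) • one := by
    have h := hM.mul_mul_add_mul_mul z u w
    rw [← hz, huzw, hzw] at h
    linear_combination (norm := module) h
  -- Expanding `z z` through the linearized identities puts `(T z + polar N u w) • z` into
  -- `span {1, u, w}`.
  by_contra hne
  have hk : T z + polar N u w ≠ 0 := fun h ↦ hne (by linear_combination h)
  refine hM.mul_notMem_span hdiv hu hw ((smul_mem_iff _ hk).mp (mem_span_triple.mpr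
    ⟨T u * (T u * N w - polar N z w) - N w * N u + N z, polar N z w - T u * N w,
      T u * (T z + polar N u w) - polar N z u, ?_⟩))
  have h := hM.mul_self z
  rw [hzz] at h
  linear_combination (norm := module) h

theorem trace_mul (hM : IsQuadraticUnital M one T N) (hdiv : ∀ x y, x ≠ 0 → y ≠ 0 → M x y ≠ 0)
    (x y : A) : T (M x y) = T x * T y - polar N x y := by
  by_cases hy : y ∈ span K {one, x}
  · obtain ⟨s, t, rfl⟩ := mem_span_pair.mp hy
    simp only [map_add, map_smul, hM.mul_one, hM.mul_self, map_sub, polar_add_right,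
      polar_smul_right, hM.polar_one_right, polar_self, hM.trace_one, smul_eq_mul, two_nsmul]
    ring
  by_cases hx : x ∈ K ∙ one
  · obtain ⟨s, rfl⟩ := mem_span_singleton.mp hx
    simp only [map_smul, LinearMap.smul_apply, hM.one_mul, polar_smul_left, polar_comm _ one,
      hM.polar_one_right, hM.trace_one, smul_eq_mul]
    ring
  by_cases hTx : T x = 0
  · have hy₁ : y ∉ K ∙ one := fun h ↦ hy (span_mono (by simp) h)
    have hxy : x ∉ span K {one, y} := by
      intro h
      rw [Set.pair_comm] at h
      exact hy (Set.pair_comm one x ▸ mem_span_insert_exchange h hx)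
    have h := hM.trace_mul_of_trace_eq_zero hdiv hy₁ hxy hTx
    linear_combination hM.trace_mul_add_trace_mul_swap x y - h + polar_comm N y x + T y * hTx
  set w := y - (T y / T x) • x
  have hTw : T w = 0 := by simp [w, div_mul_cancel₀ _ hTx]
  have hw : w ∉ span K {one, x} := fun h ↦
    hy (by simpa [w] using
      add_mem h (smul_mem _ (T y / T x) (subset_span (Set.mem_insert_of_mem _ rfl))))
  have h := hM.trace_mul_of_trace_eq_zero hdiv hx hw hTw
  simp only [w, map_sub, map_smul, hM.mul_self, polar_sub_right, polar_smul_right, polar_self,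
    hM.trace_one, smul_eq_mul, two_nsmul] at h
  linear_combination h + T x * div_mul_cancel₀ (T y) hTx

def conj (hM : IsQuadraticUnital M one T N) : A ≃ₗ[K] A :=
  LinearEquiv.ofInvolutive (T.smulRight one - LinearMap.id) fun x ↦ by
    simp only [LinearMap.sub_apply, LinearMap.smulRight_apply, LinearMap.id_apply, map_sub,
      map_smul, hM.trace_one]
    module

theorem conj_apply (hM : IsQuadraticUnital M one T N) (x : A) : hM.conj x = T x • one - x := rfl

theorem conj_mul (hM : IsQuadraticUnital M one T N) (hdiv : ∀ x y, x ≠ 0 → y ≠ 0 → M x y ≠ 0)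
    (x y : A) : hM.conj (M x y) = M (hM.conj y) (hM.conj x) := by
  simp only [conj_apply, hM.trace_mul hdiv, map_sub, map_smul, LinearMap.sub_apply,
    LinearMap.smul_apply, hM.one_mul, hM.mul_one]
  linear_combination (norm := module) -hM.mul_add_mul_swap x y

end IsQuadraticUnital

namespace IsIsotopic

variable {star circ dot : A →ₗ[K] A →ₗ[K] A}

theorem symm (h : IsIsotopic star circ) : IsIsotopic circ star := by
  obtain ⟨f, g, e, h⟩ := h
  exact ⟨f.symm, g.symm, e.symm, fun x y ↦ by simp [h]⟩

theorem trans (h₁ : IsIsotopic star circ) (h₂ : IsIsotopic circ dot) : IsIsotopic star dot := by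
  obtain ⟨f, g, e, h₁⟩ := h₁
  obtain ⟨f', g', e', h₂⟩ := h₂
  exact ⟨f.trans f', g.trans g', e.trans e', fun x y ↦ by simp [h₁, h₂]⟩

theorem flip (h : IsIsotopic star circ) : IsIsotopic star.flip circ.flip := by
  obtain ⟨f, g, e, h⟩ := h
  exact ⟨g, f, e, fun x y ↦ h y x⟩

theorem exists_isQuasiLeftInversion {bull : A →ₗ[K] A →ₗ[K] A} (h : IsIsotopic star circ)
    (hbull : IsQuasiLeftInversion star bull) : ∃ bull', IsQuasiLeftInversion circ bull' := by
  obtain ⟨f, g, e, h⟩ := h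
  refine ⟨(bull.compl₁₂ f.symm.toLinearMap e.symm.toLinearMap).compr₂ g.toLinearMap,
    fun x y hx hy ↦ ?_⟩
  obtain ⟨hne, c, hc⟩ := hbull (f.symm x) (e.symm y) (by simpa using hx) (by simpa using hy)
  refine ⟨by simpa using hne, c, ?_⟩
  simpa [h, e.symm_apply_eq] using hc

end IsIsotopic

theorem isIsotopic_compl₁₂ (M : A →ₗ[K] A →ₗ[K] A) (f g : A ≃ₗ[K] A) :
    IsIsotopic (M.compl₁₂ f.toLinearMap g.toLinearMap) M :=
  ⟨f, g, LinearEquiv.refl K A, fun _ _ ↦ rfl⟩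

theorem isIsotopic_flip_of_antiautomorphism {M : A →ₗ[K] A →ₗ[K] A} (σ : A ≃ₗ[K] A)
    (hσ : ∀ x y, σ (M x y) = M (σ y) (σ x)) : IsIsotopic M M.flip :=
  ⟨σ, σ, σ, fun x y ↦ by simp [← hσ]⟩

section UnitalIsotope

variable {star bull : A →ₗ[K] A →ₗ[K] A}

theorem isQuadraticUnital_compl₁₂ {Q : QuadraticForm K A}
    (hstar : ∀ x y : A, x ≠ 0 → y ≠ 0 → star x y ≠ 0) (hQ : ∀ x y, star x (bull x y) = Q x • y)
    {e : A} (hQe : Q e ≠ 0) (ρ ℓ : A ≃ₗ[K] A)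
    (hρ : ∀ x, ρ x = star x e) (hℓ : ∀ y, ℓ y = star e y) :
    IsQuadraticUnital (star.compl₁₂ ρ.symm.toLinearMap ℓ.symm.toLinearMap) (star e e)
      ((Q e)⁻¹ • ((polarBilin Q).flip e ∘ₗ ρ.symm.toLinearMap))
      ((Q e)⁻¹ • Q.comp ρ.symm.toLinearMap) := by
  have hρe : ρ.symm (star e e) = e := by rw [ρ.symm_apply_eq, hρ]
  have hℓ' : ∀ y, star e (ℓ.symm y) = y := fun y ↦ by rw [← hℓ, ℓ.apply_symm_apply]
  have hρ' : ∀ x, star (ρ.symm x) e = x := fun x ↦ by rw [← hρ, ρ.apply_symm_apply]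
  refine ⟨fun y ↦ by simp [hρe, hℓ'], fun x ↦ ?_, ?_, fun x y ↦ ?_⟩
  · simp [ℓ.symm_apply_eq.mpr (hℓ e).symm, hρ']
  · simp only [LinearMap.smul_apply, LinearMap.comp_apply, LinearEquiv.coe_coe, hρe,
      LinearMap.flip_apply, polarBilin_apply_apply, polar_self, two_nsmul, smul_eq_mul]
    field_simp
    ring
  · have h := mul_quasiInv_mul hstar hQ e (ρ.symm x) (ℓ.symm (star (ρ.symm x) (ℓ.symm y)))
    rw [hℓ', quasiInv_mul hstar hQ, map_smul, hℓ'] at h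
    simp only [LinearMap.compl₁₂_apply, LinearEquiv.coe_coe, LinearMap.smul_apply,
      LinearMap.comp_apply, LinearMap.flip_apply, polarBilin_apply_apply, smul_apply,
      QuadraticMap.comp_apply, smul_eq_mul]
    rw [mul_smul, mul_smul, ← smul_sub, eq_inv_smul_iff₀ hQe]
    linear_combination (norm := module) h

end UnitalIsotope

theorem IsQuasiLeftInversion.isIsotopic_flip [FiniteDimensional K A] [Nontrivial A]
    {star bull : A →ₗ[K] A →ₗ[K] A} (hstar : ∀ x y : A, x ≠ 0 → y ≠ 0 → star x y ≠ 0)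
    (hbull : IsQuasiLeftInversion star bull) : IsIsotopic star star.flip := by
  obtain ⟨Q, hQ⟩ := hbull.exists_quadraticForm
  obtain ⟨e, he⟩ := exists_ne (0 : A)
  have hQe : Q e ≠ 0 := fun h ↦ he (anisotropic_of_mul_quasiInv hstar hbull hQ e h)
  let ρ :=
    LinearEquiv.ofInjectiveEndo (star.flip e) (injective_flip_of_forall_mul_ne_zero hstar he)
  let ℓ := LinearEquiv.ofInjectiveEndo (star e) (injective_of_forall_mul_ne_zero hstar he)
  have hM := isQuadraticUnital_compl₁₂ hstar hQ hQe ρ ℓ (fun _ ↦ rfl) (fun _ ↦ rfl)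
  have hdiv :
      ∀ x y, x ≠ 0 → y ≠ 0 → star.compl₁₂ ρ.symm.toLinearMap ℓ.symm.toLinearMap x y ≠ 0 :=
    fun x y hx hy ↦ hstar _ _ (by simpa using hx) (by simpa using hy)
  have hiso := isIsotopic_compl₁₂ star ρ.symm ℓ.symm
  exact hiso.symm.trans ((isIsotopic_flip_of_antiautomorphism hM.conj (hM.conj_mul hdiv)).trans
    hiso.flip)

end

theorem stmt_19 (K A : Type*) [Field K] [AddCommGroup A] [Module K A]
    [FiniteDimensional K A] [Nontrivial A]
    (star bull : A →ₗ[K] A →ₗ[K] A)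
    (hstar : ∀ x y : A, x ≠ 0 → y ≠ 0 → star x y ≠ 0)
    (hbull : ∀ x y : A, x ≠ 0 → y ≠ 0 →
      bull x y ≠ 0 ∧ ∃ c : K, star x (bull x y) = c • y) :
    (∃ f g h : A ≃ₗ[K] A, ∀ x y : A, star x y = h.symm (star (g y) (f x))) ∧
    (∃ bull' : A →ₗ[K] A →ₗ[K] A, ∀ x y : A, x ≠ 0 → y ≠ 0 →
      bull' x y ≠ 0 ∧ ∃ c : K, star (bull' x y) x = c • y) := by
  have hiso : IsIsotopic star star.flip := IsQuasiLeftInversion.isIsotopic_flip hstar hbull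
  exact ⟨hiso, hiso.exists_isQuasiLeftInversion hbull⟩
end
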